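/- arXiv:2604.07534 — 8 statements merged into one kernel-verified Lean document; each statement's English description precedes it below -/
import Mathlib

section
/- Let a real sequence (D_i)_{i∈ℤ} and an integer m ≥ 2 be given, and label intervals indexed by ℤ as follows: the interval with index i is labeled B if either (condition 1 at index i) |D_{i−1}| > |D_{i−1+n}| and |D_{i−1}| > |D_{i−1−n}| for all n = 1,…,m (this also labels the interval i−1 as B), or (condition 1 at index i+1) |D_i| > |D_{i+n}| and |D_i| > |D_{i−n}| for all n = 1,…,m (this also labels the interval i+1 as B), or (condition 2) |D_i| > |D_{i+n}| for all n = 1,…,m−1 and |D_{i−1}| > |D_{i−1−n}| for all n = 1,…,m−1; intervals not labeled B are labeled G. Then every maximal set of consecutive B-labeled intervals has at most 2 elements, and any two distinct maximal sets of consecutive B-labeled intervals are separated by at least m−1 consecutive G-labeled intervals. -/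
/-- The detection labeling: interval `i` is labeled `B` (with parameter `m`) iff
either condition 1 fires centered at `i - 1` (which labels intervals `i-1` and `i`),
or condition 1 fires centered at `i` (which labels intervals `i` and `i+1`),
or condition 2 fires at `i`.  Intervals not labeled `B` are labeled `G`. -/
def isB (D : ℤ → ℝ) (m : ℕ) (i : ℤ) : Prop :=
  (∀ n : ℕ, 1 ≤ n → n ≤ m →
      |D (i - 1)| > |D (i - 1 + (n : ℤ))| ∧ |D (i - 1)| > |D (i - 1 - (n : ℤ))|)
  ∨ (∀ n : ℕ, 1 ≤ n → n ≤ m →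
      |D i| > |D (i + (n : ℤ))| ∧ |D i| > |D (i - (n : ℤ))|)
  ∨ ((∀ n : ℕ, 1 ≤ n → n ≤ m - 1 → |D i| > |D (i + (n : ℤ))|)
      ∧ (∀ n : ℕ, 1 ≤ n → n ≤ m - 1 → |D (i - 1)| > |D (i - 1 - (n : ℤ))|))

/-- Condition 1 centered at `k`. -/
def condP (D : ℤ → ℝ) (m : ℕ) (k : ℤ) : Prop :=
  ∀ n : ℕ, 1 ≤ n → n ≤ m →
      |D k| > |D (k + (n : ℤ))| ∧ |D k| > |D (k - (n : ℤ))|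

/-- Condition 2 at `i`. -/
def condQ (D : ℤ → ℝ) (m : ℕ) (i : ℤ) : Prop :=
  (∀ n : ℕ, 1 ≤ n → n ≤ m - 1 → |D i| > |D (i + (n : ℤ))|)
    ∧ (∀ n : ℕ, 1 ≤ n → n ≤ m - 1 → |D (i - 1)| > |D (i - 1 - (n : ℤ))|)

lemma isB_iff (D : ℤ → ℝ) (m : ℕ) (i : ℤ) :
    isB D m i ↔ condP D m (i - 1) ∨ condP D m i ∨ condQ D m i := Iff.rfl

/-- Two condition-1 centers are more than `m` apart. -/
lemma LPP {D : ℤ → ℝ} {m : ℕ} {k k' : ℤ} (hk : condP D m k) (hk' : condP D m k')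
    (h1 : k < k') (h2 : k' ≤ k + m) : False := by
  set n := (k' - k).toNat with hn
  have hA := (hk n (by omega) (by omega)).1
  have hB := (hk' n (by omega) (by omega)).2
  have e1 : k + (n : ℤ) = k' := by omega
  have e2 : k' - (n : ℤ) = k := by omega
  rw [e1] at hA
  rw [e2] at hB
  linarith

/-- Two condition-2 indices are adjacent or more than `m` apart. -/
lemma LQQ {D : ℤ → ℝ} {m : ℕ} {i i' : ℤ} (hm : 2 ≤ m) (hi : condQ D m i)
    (hi' : condQ D m i') (h1 : i + 2 ≤ i') (h2 : i' ≤ i + m) : False := by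
  set n := (i' - 1 - i).toNat with hn
  have hA := hi.1 n (by omega) (by omega)
  have hB := hi'.2 n (by omega) (by omega)
  have e1 : i + (n : ℤ) = i' - 1 := by omega
  have e2 : i' - 1 - (n : ℤ) = i := by omega
  rw [e1] at hA
  rw [e2] at hB
  linarith

/-- A condition-2 index strictly left of, within `m-1` of, a condition-1 center: impossible. -/
lemma LQP {D : ℤ → ℝ} {m : ℕ} {i k : ℤ} (hm : 2 ≤ m) (hi : condQ D m i)
    (hk : condP D m k) (h1 : i < k) (h2 : k ≤ i + m - 1) : False := by
  set n := (k - i).toNat with hn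
  have hA := hi.1 n (by omega) (by omega)
  have hB := (hk n (by omega) (by omega)).2
  have e1 : i + (n : ℤ) = k := by omega
  have e2 : k - (n : ℤ) = i := by omega
  rw [e1] at hA
  rw [e2] at hB
  linarith

/-- A condition-2 index at distance in `[2, m]` right of a condition-1 center: impossible. -/
lemma LPQ {D : ℤ → ℝ} {m : ℕ} {k i : ℤ} (hm : 2 ≤ m) (hk : condP D m k)
    (hi : condQ D m i) (h1 : k + 2 ≤ i) (h2 : i ≤ k + m) : False := by
  set n := (i - 1 - k).toNat with hn
  have hA := (hk n (by omega) (by omega)).1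
  have hB := hi.2 n (by omega) (by omega)
  have e1 : k + (n : ℤ) = i - 1 := by omega
  have e2 : i - 1 - (n : ℤ) = k := by omega
  rw [e1] at hA
  rw [e2] at hB
  linarith

/-- If condition 1 fires at `i`, then interval `i+2` is not `B`. -/
lemma auxPB {D : ℤ → ℝ} {m : ℕ} {i : ℤ} (hm : 2 ≤ m) (hP : condP D m i)
    (h2 : isB D m (i + 2)) : False := by
  rw [isB_iff] at h2
  have e : i + 2 - 1 = i + 1 := by ring
  rw [e] at h2
  rcases h2 with c | c | c
  · exact LPP hP c (by omega) (by omega)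
  · exact LPP hP c (by omega) (by omega)
  · exact LPQ hm hP c (by omega) (by omega)

/-- Every maximal set of consecutive `B`-labeled intervals has at most 2 elements,
and any two distinct maximal sets of consecutive `B`-labeled intervals are separated
by at least `m - 1` consecutive `G`-labeled intervals. -/
theorem statement0 (D : ℤ → ℝ) (m : ℕ) (hm : 2 ≤ m) :
    (∀ i : ℤ, ¬ (isB D m i ∧ isB D m (i + 1) ∧ isB D m (i + 2))) ∧
    (∀ i j : ℤ, isB D m i → isB D m j → i < j →
      (∃ l : ℤ, i < l ∧ l < j ∧ ¬ isB D m l) → i + (m : ℤ) ≤ j) := by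
  constructor
  · rintro i ⟨h0, h1, h2⟩
    rw [isB_iff] at h0 h1
    have e1 : i + 1 - 1 = i := by ring
    rw [e1] at h1
    rcases h1 with hP | hP1 | hQ1
    · exact auxPB hm hP h2
    · rcases h0 with c | c | c
      · exact LPP c hP1 (by omega) (by omega)
      · exact LPP c hP1 (by omega) (by omega)
      · exact LQP hm c hP1 (by omega) (by omega)
    · rcases h0 with c | c | c
      · exact LPQ hm c hQ1 (by omega) (by omega)
      · exact auxPB hm c h2
      · rw [isB_iff] at h2
        have e2 : i + 2 - 1 = i + 1 := by ring
        rw [e2] at h2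
        rcases h2 with d | d | d
        · exact LQP hm c d (by omega) (by omega)
        · exact LQP hm hQ1 d (by omega) (by omega)
        · exact LQQ hm c d (by omega) (by omega)
  · rintro i j hi hj hij ⟨l, hl1, hl2, -⟩
    by_contra h
    push_neg at h
    -- so i + 2 ≤ j ≤ i + m - 1
    rw [isB_iff] at hi hj
    rcases hi with a | a | a <;> rcases hj with b | b | b
    · exact absurd (LPP a b (by omega) (by omega)) not_false
    · exact absurd (LPP a b (by omega) (by omega)) not_false
    · exact absurd (LPQ hm a b (by omega) (by omega)) not_false
    · exact absurd (LPP a b (by omega) (by omega)) not_false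
    · exact absurd (LPP a b (by omega) (by omega)) not_false
    · exact absurd (LPQ hm a b (by omega) (by omega)) not_false
    · exact absurd (LQP hm a b (by omega) (by omega)) not_false
    · exact absurd (LQP hm a b (by omega) (by omega)) not_false
    · exact absurd (LQQ hm a b (by omega) (by omega)) not_false
end

section
/- Let f: ℝ → ℝ be continuous on ℝ, C² on ℝ∖{μ} with bounded second derivative there, with one-sided derivatives f'(μ⁻), f'(μ⁺) existing and jump [f'] := f'(μ⁺) − f'(μ⁻) ≠ 0. Let X be a strictly increasing grid and suppose μ ∈ [x_j, x_{j+1}]. If h_max < h_c := |[f']|/(4 M₂), where M₂ := sup_{ℝ∖{μ}} |f''|, then the interval I_j = [x_j, x_{j+1}] is labeled B by the detection algorithm. -/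
open Set Filter Topology

/-- Second divided difference bound: if g has M-Lipschitz derivative G, then
the second divided difference on a<b<c is ≤ M/2 in absolute value. -/
lemma dd_bound (g G : ℝ → ℝ) (hg : ∀ x, HasDerivAt g (G x) x) (M : ℝ)
    (hLip : ∀ x y : ℝ, x ≤ y → |G y - G x| ≤ M * (y - x))
    (a b c : ℝ) (hab : a < b) (hbc : b < c) :
    |g a / ((b-a)*(c-a)) - g b / ((b-a)*(c-b)) + g c / ((c-b)*(c-a))| ≤ M / 2 := by
  have hba : b - a ≠ 0 := by linarith
  have hcb : c - b ≠ 0 := by linarith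
  have hca : c - a ≠ 0 := by linarith
  set E : ℝ := g a / ((b-a)*(c-a)) - g b / ((b-a)*(c-b)) + g c / ((c-b)*(c-a)) with hE
  set s1 : ℝ := (g b - g a) / (b - a) with hs1
  set B : ℝ := s1 - E * (a + b) with hB
  set C : ℝ := g a - s1 * a + E * (a * b) with hC
  set h : ℝ → ℝ := fun t => g t - (E * t^2 + B * t + C) with hh
  have hder : ∀ t : ℝ, HasDerivAt h (G t - (2 * E * t + B)) t := by
    intro t
    have hp : HasDerivAt (fun t : ℝ => E * t^2 + B * t + C) (2 * E * t + B) t := by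
      have := (((hasDerivAt_pow 2 t).const_mul E).add ((hasDerivAt_id t).const_mul B)).add_const C
      simpa [mul_comm, mul_assoc, mul_left_comm] using this.congr_deriv (by ring_nf)
    exact (hg t).sub hp
  have hs1e : s1 * (b - a) = g b - g a := by
    rw [hs1]; field_simp
  have hha : h a = 0 := by simp only [hh, hB, hC]; ring
  have hhb : h b = 0 := by simp only [hh, hB, hC]; linear_combination -hs1e
  have hhc : h c = 0 := by
    simp only [hh, hB, hC, hs1, hE]
    field_simp
    ring
  obtain ⟨x1, hx1, hgx1⟩ := exists_hasDerivAt_eq_zero hab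
    (fun t _ => (hder t).continuousAt.continuousWithinAt) (hha.trans hhb.symm)
    (fun t _ => hder t)
  obtain ⟨x2, hx2, hgx2⟩ := exists_hasDerivAt_eq_zero hbc
    (fun t _ => (hder t).continuousAt.continuousWithinAt) (hhb.trans hhc.symm)
    (fun t _ => hder t)
  have hx12 : x1 < x2 := lt_trans hx1.2 hx2.1
  have key : G x2 - G x1 = 2 * E * (x2 - x1) := by
    have e1 : G x1 = 2 * E * x1 + B := by linarith [hgx1]
    have e2 : G x2 = 2 * E * x2 + B := by linarith [hgx2]
    rw [e1, e2]; ring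
  have hb1 := hLip x1 x2 hx12.le
  rw [key] at hb1
  rw [abs_mul, abs_of_pos (by linarith : (0:ℝ) < x2 - x1)] at hb1
  have h2E : |2 * E| ≤ M := le_of_mul_le_mul_right (by linarith) (by linarith : (0:ℝ) < x2 - x1)
  rw [abs_mul, abs_two] at h2E
  linarith [abs_nonneg E]

open Set Filter Topology

lemma deriv_bound_right (f f' f'' : ℝ → ℝ) (μ dR M₂ : ℝ)
    (hf : Continuous f)
    (hd1 : ∀ x ≠ μ, HasDerivAt f (f' x) x)
    (hd2 : ∀ x ≠ μ, HasDerivAt f' (f'' x) x)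
    (hM : ∀ x ≠ μ, |f'' x| ≤ M₂)
    (hdR : HasDerivWithinAt f dR (Set.Ici μ) μ)
    (hM0 : 0 ≤ M₂) :
    ∀ y, μ < y → |f' y - dR| ≤ M₂ * (y - μ) := by
  have lip : ∀ x ∈ Ioi μ, ∀ y ∈ Ioi μ, |f' y - f' x| ≤ M₂ * |y - x| := by
    intro x hx y hy
    have := (convex_Ioi μ).norm_image_sub_le_of_norm_hasDerivWithin_le
      (f := f') (f' := f'')
      (fun z hz => (hd2 z (ne_of_gt hz)).hasDerivWithinAt)
      (fun z hz => by simpa [Real.norm_eq_abs] using hM z (ne_of_gt hz)) hx hy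
    simpa [Real.norm_eq_abs] using this
  have hslope : Tendsto (slope f μ) (𝓝[>] μ) (𝓝 dR) := by
    have h := hasDerivWithinAt_iff_tendsto_slope.1 hdR
    rwa [Set.Ici_sdiff_left] at h
  have hbnd : ∀ t, μ < t → dist (slope f μ t) (f' t) ≤ M₂ * (t - μ) := by
    intro t ht
    obtain ⟨ζ, hζ, hζeq⟩ := exists_hasDerivAt_eq_slope f f' ht hf.continuousOn
      (fun x hx => hd1 x (ne_of_gt hx.1))
    have h1 : slope f μ t = f' ζ := by rw [slope_def_field, hζeq]
    rw [Real.dist_eq, h1]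
    calc |f' ζ - f' t| = |f' t - f' ζ| := abs_sub_comm _ _
      _ ≤ M₂ * |t - ζ| := lip ζ hζ.1 t ht
      _ ≤ M₂ * (t - μ) := by
          rw [abs_of_pos (by linarith [hζ.2] : (0:ℝ) < t - ζ)]
          have := hζ.1
          nlinarith
  have hlim : Tendsto f' (𝓝[>] μ) (𝓝 dR) := by
    apply hslope.congr_dist
    apply squeeze_zero' (f := fun t => dist (slope f μ t) (f' t)) (g := fun t => M₂ * (t - μ))
    · exact Eventually.of_forall fun t => dist_nonneg
    · filter_upwards [self_mem_nhdsWithin] with t ht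
      exact hbnd t ht
    · have : Tendsto (fun t : ℝ => M₂ * (t - μ)) (𝓝 μ) (𝓝 (M₂ * (μ - μ))) :=
        (tendsto_id.sub_const μ).const_mul M₂
      simpa using this.mono_left nhdsWithin_le_nhds
  intro y hy
  have hev : ∀ᶠ t in 𝓝[>] μ, |f' y - f' t| ≤ M₂ * (y - μ) := by
    filter_upwards [self_mem_nhdsWithin, Ioo_mem_nhdsGT_of_mem ⟨le_refl μ, hy⟩] with t ht ht2
    calc |f' y - f' t| ≤ M₂ * |y - t| := lip t ht y hy
      _ ≤ M₂ * (y - μ) := by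
          rw [abs_of_pos (by linarith [ht2.2] : (0:ℝ) < y - t)]
          have := ht2.1; nlinarith
  have htend : Tendsto (fun t => |f' y - f' t|) (𝓝[>] μ) (𝓝 |f' y - dR|) :=
    ((tendsto_const_nhds.sub hlim).abs)
  exact le_of_tendsto htend hev

lemma deriv_bound_left (f f' f'' : ℝ → ℝ) (μ dL M₂ : ℝ)
    (hf : Continuous f)
    (hd1 : ∀ x ≠ μ, HasDerivAt f (f' x) x)
    (hd2 : ∀ x ≠ μ, HasDerivAt f' (f'' x) x)
    (hM : ∀ x ≠ μ, |f'' x| ≤ M₂)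
    (hdL : HasDerivWithinAt f dL (Set.Iic μ) μ)
    (hM0 : 0 ≤ M₂) :
    ∀ y, y < μ → |f' y - dL| ≤ M₂ * (μ - y) := by
  have lip : ∀ x ∈ Iio μ, ∀ y ∈ Iio μ, |f' y - f' x| ≤ M₂ * |y - x| := by
    intro x hx y hy
    have := (convex_Iio μ).norm_image_sub_le_of_norm_hasDerivWithin_le
      (f := f') (f' := f'')
      (fun z hz => (hd2 z (ne_of_lt hz)).hasDerivWithinAt)
      (fun z hz => by simpa [Real.norm_eq_abs] using hM z (ne_of_lt hz)) hx hy
    simpa [Real.norm_eq_abs] using this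
  have hslope : Tendsto (slope f μ) (𝓝[<] μ) (𝓝 dL) := by
    have h := hasDerivWithinAt_iff_tendsto_slope.1 hdL
    rwa [Set.Iic_diff_right] at h
  have hbnd : ∀ t, t < μ → dist (slope f μ t) (f' t) ≤ M₂ * (μ - t) := by
    intro t ht
    obtain ⟨ζ, hζ, hζeq⟩ := exists_hasDerivAt_eq_slope f f' ht hf.continuousOn
      (fun x hx => hd1 x (ne_of_lt hx.2))
    have h1 : slope f μ t = f' ζ := by
      have hne1 : t - μ ≠ 0 := by linarith
      have hne2 : μ - t ≠ 0 := by linarith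
      rw [slope_def_field, hζeq]
      field_simp
      ring
    rw [Real.dist_eq, h1]
    calc |f' ζ - f' t| = |f' t - f' ζ| := abs_sub_comm _ _
      _ ≤ M₂ * |t - ζ| := lip ζ hζ.2 t ht
      _ ≤ M₂ * (μ - t) := by
          rw [abs_of_neg (by linarith [hζ.1] : (t:ℝ) - ζ < 0)]
          have := hζ.2
          nlinarith
  have hlim : Tendsto f' (𝓝[<] μ) (𝓝 dL) := by
    apply hslope.congr_dist
    apply squeeze_zero' (f := fun t => dist (slope f μ t) (f' t)) (g := fun t => M₂ * (μ - t))
    · exact Eventually.of_forall fun t => dist_nonneg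
    · filter_upwards [self_mem_nhdsWithin] with t ht
      exact hbnd t ht
    · have : Tendsto (fun t : ℝ => M₂ * (μ - t)) (𝓝 μ) (𝓝 (M₂ * (μ - μ))) :=
        ((tendsto_const_nhds.sub tendsto_id)).const_mul M₂
      simpa using this.mono_left nhdsWithin_le_nhds
  intro y hy
  have hev : ∀ᶠ t in 𝓝[<] μ, |f' y - f' t| ≤ M₂ * (μ - y) := by
    filter_upwards [self_mem_nhdsWithin, Ioo_mem_nhdsLT_of_mem ⟨hy, le_refl μ⟩] with t ht ht2
    calc |f' y - f' t| ≤ M₂ * |y - t| := lip t ht y hy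
      _ ≤ M₂ * (μ - y) := by
          rw [abs_of_neg (by linarith [ht2.1] : (y:ℝ) - t < 0)]
          have := ht2.2; nlinarith
  have htend : Tendsto (fun t => |f' y - f' t|) (𝓝[<] μ) (𝓝 |f' y - dL|) :=
    ((tendsto_const_nhds.sub hlim).abs)
  exact le_of_tendsto htend hev

lemma lip_on (f' f'' : ℝ → ℝ) (s : Set ℝ) (hs : Convex ℝ s) (M₂ : ℝ)
    (hd2 : ∀ x ∈ s, HasDerivAt f' (f'' x) x) (hM : ∀ x ∈ s, |f'' x| ≤ M₂) :
    ∀ x ∈ s, ∀ y ∈ s, |f' y - f' x| ≤ M₂ * |y - x| := by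
  intro x hx y hy
  have := hs.norm_image_sub_le_of_norm_hasDerivWithin_le
    (f := f') (f' := f'')
    (fun z hz => (hd2 z hz).hasDerivWithinAt)
    (fun z hz => by simpa [Real.norm_eq_abs] using hM z hz) hx hy
  simpa [Real.norm_eq_abs] using this


/-- Second order divided difference on the nodes `X i, X (i+1), X (i+2)`:
`D_i f = f(x_i)/(h_{i+1}(h_{i+1}+h_{i+2})) − f(x_{i+1})/(h_{i+1}h_{i+2})
        + f(x_{i+2})/(h_{i+2}(h_{i+1}+h_{i+2}))` where `h_i = x_i − x_{i−1}`. -/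
noncomputable def Dd (X : ℤ → ℝ) (f : ℝ → ℝ) (i : ℤ) : ℝ :=
    f (X i) / ((X (i + 1) - X i) * (X (i + 2) - X i))
  - f (X (i + 1)) / ((X (i + 1) - X i) * (X (i + 2) - X (i + 1)))
  + f (X (i + 2)) / ((X (i + 2) - X (i + 1)) * (X (i + 2) - X i))

set_option maxHeartbeats 2000000 in
/-- If `h_max < h_c := |[f']|/(4 M₂)`, the interval `[x_j, x_{j+1}]` containing
the corner singularity `μ` is labeled `B` by the detection algorithm. -/
theorem statement1 (m : ℕ) (hm : 2 ≤ m)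
    (X : ℤ → ℝ) (hX : StrictMono X) (hmax : ℝ)
    (hhi : ∀ i : ℤ, X i - X (i - 1) ≤ hmax)
    (f f' f'' : ℝ → ℝ) (μ : ℝ)
    (hf : Continuous f)
    (hd1 : ∀ x ≠ μ, HasDerivAt f (f' x) x)
    (hd2 : ∀ x ≠ μ, HasDerivAt f' (f'' x) x)
    (hc2 : ContinuousOn f'' {μ}ᶜ)
    (M₂ : ℝ) (hM : ∀ x ≠ μ, |f'' x| ≤ M₂)
    (dL dR : ℝ)
    (hdL : HasDerivWithinAt f dL (Set.Iic μ) μ)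
    (hdR : HasDerivWithinAt f dR (Set.Ici μ) μ)
    (hjump : dR - dL ≠ 0)
    (j : ℤ) (hμ : μ ∈ Set.Icc (X j) (X (j + 1)))
    (hcrit : hmax < |dR - dL| / (4 * M₂)) :
    isB (Dd X f) m j := by
  -- basic grid facts
  have hgrid : ∀ i : ℤ, X i < X (i + 1) := fun i => hX (by omega)
  have hstep : ∀ i : ℤ, X (i + 1) - X i ≤ hmax := by
    intro i
    have := hhi (i + 1)
    simpa using this
  have hM0 : 0 ≤ M₂ := le_trans (abs_nonneg _) (hM (μ + 1) (by linarith))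
  have hmaxpos : 0 < hmax := lt_of_lt_of_le (sub_pos.2 (hgrid j)) (hstep j)
  have hM2pos : 0 < M₂ := by
    rcases hM0.lt_or_eq with h | h
    · exact h
    · exfalso
      rw [← h] at hcrit
      norm_num at hcrit
      linarith
  set c : ℝ := dR - dL with hc
  have hcpos : 0 < |c| := abs_pos.2 hjump
  set φ : ℝ → ℝ := fun x => c * max (x - μ) 0 with hφ
  set g : ℝ → ℝ := fun x => f x - φ x with hg
  set G : ℝ → ℝ := fun x => if x < μ then f' x else if μ < x then f' x - c else dL with hG
  -- one-sided derivative bounds for f'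
  have hMright := deriv_bound_right f f' f'' μ dR M₂ hf hd1 hd2 hM hdR hM0
  have hMleft := deriv_bound_left f f' f'' μ dL M₂ hf hd1 hd2 hM hdL hM0
  have lipR := lip_on f' f'' (Ioi μ) (convex_Ioi μ) M₂
    (fun z hz => hd2 z (ne_of_gt hz)) (fun z hz => hM z (ne_of_gt hz))
  have lipL := lip_on f' f'' (Iio μ) (convex_Iio μ) M₂
    (fun z hz => hd2 z (ne_of_lt hz)) (fun z hz => hM z (ne_of_lt hz))
  -- φ vanishes on Iic μ and is linear on Ici μ
  have hφ0 : ∀ y, y ≤ μ → φ y = 0 := by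
    intro y hy
    simp [hφ, max_eq_right (sub_nonpos.2 hy)]
  have hφlin : ∀ y, μ ≤ y → φ y = c * (y - μ) := by
    intro y hy
    simp [hφ, max_eq_left (sub_nonneg.2 hy)]
  -- g is differentiable with derivative G
  have hgG : ∀ x, HasDerivAt g (G x) x := by
    intro x
    rcases lt_trichotomy x μ with hx | hx | hx
    · have hφd : HasDerivAt φ 0 x := by
        apply (hasDerivAt_const x (0 : ℝ)).congr_of_eventuallyEq
        filter_upwards [Iio_mem_nhds hx] with y hy
        exact hφ0 y (le_of_lt hy)
      have := (hd1 x (ne_of_lt hx)).sub hφd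
      simp only [hG, if_pos hx, sub_zero] at this ⊢
      exact this
    · subst hx
      have hIic : HasDerivWithinAt g dL (Iic x) x := by
        have hφd : HasDerivWithinAt φ 0 (Iic x) x := by
          apply (hasDerivWithinAt_const x (Iic x) (0 : ℝ)).congr
            (fun y hy => hφ0 y hy) (hφ0 x le_rfl)
        have := hdL.sub hφd
        rw [sub_zero] at this
        exact this
      have hIci : HasDerivWithinAt g dL (Ici x) x := by
        have hlind : HasDerivWithinAt (fun y => c * (y - x)) c (Ici x) x := by
          have : HasDerivAt (fun y : ℝ => c * (y - x)) (c * 1) x :=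
            ((hasDerivAt_id x).sub_const x).const_mul c
          simpa using this.hasDerivWithinAt
        have hφd : HasDerivWithinAt φ c (Ici x) x :=
          hlind.congr (fun y hy => hφlin y hy) (hφlin x le_rfl)
        have := hdR.sub hφd
        have he : dR - c = dL := by rw [hc]; ring
        rwa [he] at this
      have := (hIic.union hIci)
      rw [Iic_union_Ici] at this
      rw [hasDerivWithinAt_univ] at this
      simpa [hG] using this
    · have hφd : HasDerivAt φ c x := by
        have hb : HasDerivAt (fun y : ℝ => c * (y - μ)) (c * 1) x :=
          ((hasDerivAt_id x).sub_const μ).const_mul c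
        apply (by simpa using hb : HasDerivAt (fun y : ℝ => c * (y - μ)) c x).congr_of_eventuallyEq
        filter_upwards [Ioi_mem_nhds hx] with y hy
        exact hφlin y (le_of_lt hy)
      have := (hd1 x (ne_of_gt hx)).sub hφd
      simp only [hG, if_neg (not_lt.2 (le_of_lt hx)), if_pos hx]
      exact this
  -- G is M₂-Lipschitz
  have hGval_lt : ∀ y, y < μ → G y = f' y := fun y hy => by simp [hG, if_pos hy]
  have hGval_gt : ∀ y, μ < y → G y = f' y - c := fun y hy => by
    simp [hG, if_neg (not_lt.2 (le_of_lt hy)), if_pos hy]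
  have hGval_eq : G μ = dL := by simp [hG]
  have hL : ∀ u v : ℝ, u ≤ v → v ≤ μ → |G v - G u| ≤ M₂ * (v - u) := by
    intro u v huv hvμ
    rcases eq_or_lt_of_le huv with rfl | huv
    · simp
    rcases eq_or_lt_of_le hvμ with rfl | hvμ
    · rw [hGval_eq, hGval_lt u huv]
      rw [abs_sub_comm]
      exact hMleft u huv
    · rw [hGval_lt u (lt_trans huv hvμ), hGval_lt v hvμ]
      have := lipL u (lt_trans huv hvμ) v hvμ
      rwa [abs_of_pos (by linarith : (0:ℝ) < v - u)] at this
  have hR : ∀ u v : ℝ, u ≤ v → μ ≤ u → |G v - G u| ≤ M₂ * (v - u) := by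
    intro u v huv hμu
    rcases eq_or_lt_of_le huv with rfl | huv
    · simp
    rcases eq_or_lt_of_le hμu with rfl | hμu
    · rw [hGval_eq, hGval_gt v huv]
      have h1 : |f' v - c - dL| = |f' v - dR| := by
        congr 1; rw [hc]; ring
      rw [h1]
      exact hMright v huv
    · rw [hGval_gt u hμu, hGval_gt v (lt_trans hμu huv)]
      have := lipR u hμu v (lt_trans hμu huv)
      have h2 : |f' v - c - (f' u - c)| = |f' v - f' u| := by congr 1; ring
      rw [h2]
      rwa [abs_of_pos (by linarith : (0:ℝ) < v - u)] at this
  have hGlip : ∀ u v : ℝ, u ≤ v → |G v - G u| ≤ M₂ * (v - u) := by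
    intro u v huv
    rcases le_total v μ with h | h
    · exact hL u v huv h
    rcases le_total μ u with h' | h'
    · exact hR u v huv h'
    · calc |G v - G u| ≤ |G v - G μ| + |G μ - G u| := abs_sub_le _ _ _
        _ ≤ M₂ * (v - μ) + M₂ * (μ - u) := add_le_add (hR μ v h le_rfl) (hL u μ h' le_rfl)
        _ = M₂ * (v - u) := by ring
  -- bound on divided differences of g
  have hgood : ∀ i : ℤ, |Dd X g i| ≤ M₂ / 2 := by
    intro i
    have h2 : X (i + 1) < X (i + 2) := hX (by omega)
    have := dd_bound g G hgG M₂ hGlip (X i) (X (i + 1)) (X (i + 2)) (hgrid i) h2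
    simpa [Dd] using this
  -- split Dd f into Dd g + Dd φ
  have hsplit : ∀ i : ℤ, Dd X f i = Dd X g i + Dd X φ i := by
    intro i
    simp only [Dd, hg]
    ring
  -- Dd φ vanishes away from the singular cell
  have hφright : ∀ i : ℤ, j + 1 ≤ i → Dd X φ i = 0 := by
    intro i hi
    have hm1 : μ ≤ X i := le_trans hμ.2 (hX.le_iff_le.2 hi)
    have hm2 : μ ≤ X (i + 1) := le_trans hm1 (le_of_lt (hgrid i))
    have hm3 : μ ≤ X (i + 2) := le_trans hm2 (le_of_lt (hX (by omega)))
    have d1 : X (i + 1) - X i ≠ 0 := ne_of_gt (sub_pos.2 (hgrid i))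
    have d2 : X (i + 2) - X (i + 1) ≠ 0 := ne_of_gt (sub_pos.2 (hX (by omega : (i+1:ℤ) < i + 2)))
    have d3 : X (i + 2) - X i ≠ 0 :=
      ne_of_gt (sub_pos.2 (lt_trans (hgrid i) (hX (by omega : (i+1:ℤ) < i + 2))))
    rw [Dd, hφlin _ hm1, hφlin _ hm2, hφlin _ hm3]
    field_simp
    ring
  have hφleft : ∀ i : ℤ, i ≤ j - 2 → Dd X φ i = 0 := by
    intro i hi
    have hm3 : X (i + 2) ≤ μ := le_trans (hX.le_iff_le.2 (by omega : i + 2 ≤ j)) hμ.1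
    have hm2 : X (i + 1) ≤ μ := le_trans (le_of_lt (hX (by omega : (i+1:ℤ) < i + 2))) hm3
    have hm1 : X i ≤ μ := le_trans (le_of_lt (hgrid i)) hm2
    rw [Dd, hφ0 _ hm1, hφ0 _ hm2, hφ0 _ hm3]
    simp
  have hgoodf : ∀ i : ℤ, (j + 1 ≤ i ∨ i ≤ j - 2) → |Dd X f i| ≤ M₂ / 2 := by
    intro i hi
    have hz : Dd X φ i = 0 := by
      rcases hi with h | h
      · exact hφright i h
      · exact hφleft i h
    rw [hsplit i, hz, add_zero]
    exact hgood i
  -- the two singular divided differences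
  have e1 : (j - 1 + 1 : ℤ) = j := by ring
  have e2 : (j - 1 + 2 : ℤ) = j + 1 := by ring
  have x01 : X (j - 1) < X j := hX (by omega)
  have x12 : X j < X (j + 1) := hgrid j
  have x23 : X (j + 1) < X (j + 2) := hX (by omega)
  have hA : Dd X φ (j - 1) = c * (X (j+1) - μ) / ((X (j+1) - X j) * (X (j+1) - X (j-1))) := by
    have d1 : X j - X (j - 1) ≠ 0 := ne_of_gt (sub_pos.2 x01)
    have d2 : X (j + 1) - X j ≠ 0 := ne_of_gt (sub_pos.2 x12)
    have d3 : X (j + 1) - X (j - 1) ≠ 0 := ne_of_gt (sub_pos.2 (lt_trans x01 x12))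
    rw [Dd, e1, e2, hφ0 _ (le_trans (le_of_lt x01) hμ.1), hφ0 _ hμ.1, hφlin _ hμ.2]
    field_simp
    ring
  have hB : Dd X φ j = c * (μ - X j) / ((X (j+1) - X j) * (X (j+2) - X j)) := by
    rw [Dd, hφ0 _ hμ.1, hφlin _ hμ.2, hφlin _ (le_trans hμ.2 (le_of_lt x23))]
    have d1 : X (j + 1) - X j ≠ 0 := ne_of_gt (sub_pos.2 x12)
    have d2 : X (j + 2) - X (j + 1) ≠ 0 := ne_of_gt (sub_pos.2 x23)
    have d3 : X (j + 2) - X j ≠ 0 := ne_of_gt (sub_pos.2 (lt_trans x12 x23))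
    field_simp
    ring
  -- lower bound for |Dd φ (j-1)| + |Dd φ j|
  have habsA : |Dd X φ (j-1)| = |c| * (X (j+1) - μ) / ((X (j+1) - X j) * (X (j+1) - X (j-1))) := by
    rw [hA, abs_div, abs_mul, abs_of_nonneg (sub_nonneg.2 hμ.2),
      abs_of_pos (mul_pos (sub_pos.2 x12) (sub_pos.2 (lt_trans x01 x12)))]
  have habsB : |Dd X φ j| = |c| * (μ - X j) / ((X (j+1) - X j) * (X (j+2) - X j)) := by
    rw [hB, abs_div, abs_mul, abs_of_nonneg (sub_nonneg.2 hμ.1),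
      abs_of_pos (mul_pos (sub_pos.2 x12) (sub_pos.2 (lt_trans x12 x23)))]
  have hDen : (0:ℝ) < (X (j+1) - X j) * (2 * hmax) :=
    mul_pos (sub_pos.2 x12) (by linarith)
  have hd01 : X j - X (j - 1) ≤ hmax := by simpa using hhi j
  have hd12 : X (j + 1) - X j ≤ hmax := hstep j
  have hd23 : X (j + 2) - X (j + 1) ≤ hmax := by
    have := hstep (j + 1)
    rwa [show (j + 1 + 1 : ℤ) = j + 2 by ring] at this
  have hboundA : |c| * (X (j+1) - μ) / ((X (j+1) - X j) * (2 * hmax))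
      ≤ |Dd X φ (j-1)| := by
    rw [habsA]
    apply div_le_div_of_nonneg_left (mul_nonneg (abs_nonneg c) (sub_nonneg.2 hμ.2))
      (mul_pos (sub_pos.2 x12) (sub_pos.2 (lt_trans x01 x12)))
    nlinarith [sub_pos.2 x12]
  have hboundB : |c| * (μ - X j) / ((X (j+1) - X j) * (2 * hmax))
      ≤ |Dd X φ j| := by
    rw [habsB]
    apply div_le_div_of_nonneg_left (mul_nonneg (abs_nonneg c) (sub_nonneg.2 hμ.1))
      (mul_pos (sub_pos.2 x12) (sub_pos.2 (lt_trans x12 x23)))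
    nlinarith [sub_pos.2 x12]
  have hsumAB : |c| / (2 * hmax) ≤ |Dd X φ (j-1)| + |Dd X φ j| := by
    have key : |c| * (X (j+1) - μ) / ((X (j+1) - X j) * (2 * hmax))
        + |c| * (μ - X j) / ((X (j+1) - X j) * (2 * hmax)) = |c| / (2 * hmax) := by
      rw [← add_div]
      rw [show |c| * (X (j+1) - μ) + |c| * (μ - X j) = (X (j+1) - X j) * |c| by ring]
      rw [mul_div_mul_left _ _ (ne_of_gt (sub_pos.2 x12))]
    linarith [hboundA, hboundB]
  -- |c|/(2 hmax) > 2 M₂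
  have hcm : 2 * M₂ < |c| / (2 * hmax) := by
    have h1 : hmax * (4 * M₂) < |c| := by
      have := (lt_div_iff₀ (by positivity : (0:ℝ) < 4 * M₂)).1 hcrit
      exact this
    rw [lt_div_iff₀ (by linarith : (0:ℝ) < 2 * hmax)]
    nlinarith
  -- lower bound on the singular divided differences of f
  set P : ℝ := |Dd X f (j - 1)| with hP
  set Q : ℝ := |Dd X f j| with hQ
  have htriA : |Dd X φ (j-1)| ≤ P + M₂ / 2 := by
    have h1 : Dd X φ (j-1) = Dd X f (j-1) - Dd X g (j-1) := by
      have := hsplit (j-1); linarith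
    rw [h1]
    calc |Dd X f (j-1) - Dd X g (j-1)| ≤ |Dd X f (j-1)| + |Dd X g (j-1)| := abs_sub (Dd X f (j-1)) (Dd X g (j-1))
      _ ≤ P + M₂ / 2 := by
          have := hgood (j-1); rw [hP]; linarith
  have htriB : |Dd X φ j| ≤ Q + M₂ / 2 := by
    have h1 : Dd X φ j = Dd X f j - Dd X g j := by
      have := hsplit j; linarith
    rw [h1]
    calc |Dd X f j - Dd X g j| ≤ |Dd X f j| + |Dd X g j| := abs_sub (Dd X f j) (Dd X g j)
      _ ≤ Q + M₂ / 2 := by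
          have := hgood j; rw [hQ]; linarith
  have hPQ : M₂ < P + Q := by linarith
  have hPnn : 0 ≤ P := abs_nonneg _
  have hQnn : 0 ≤ Q := abs_nonneg _
  -- neighbor bound helper
  have hnb : ∀ k : ℤ, (j + 1 ≤ k ∨ k ≤ j - 2) → |Dd X f k| ≤ M₂ / 2 := hgoodf
  -- final case split
  rcases le_or_gt Q (M₂ / 2) with hq | hq
  · -- P dominates: use first disjunct
    have hPbig : M₂ / 2 < P := by linarith
    have hPQ2 : Q < P := by linarith
    left
    intro n h1 hn
    constructor
    · -- |D (j-1)| > |D (j-1+n)|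
      rcases eq_or_lt_of_le h1 with rfl | h2
      · rw [show (j - 1 + ((1:ℕ):ℤ)) = j by push_cast; ring]
        exact hPQ2
      · have hk : j + 1 ≤ j - 1 + (n : ℤ) := by
          have : (2:ℤ) ≤ (n:ℤ) := by exact_mod_cast h2
          omega
        have := hnb (j - 1 + (n : ℤ)) (Or.inl hk)
        calc |Dd X f (j - 1 + (n:ℤ))| ≤ M₂ / 2 := this
          _ < P := hPbig
    · have hk : j - 1 - (n : ℤ) ≤ j - 2 := by
        have : (1:ℤ) ≤ (n:ℤ) := by exact_mod_cast h1
        omega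
      have := hnb (j - 1 - (n : ℤ)) (Or.inr hk)
      calc |Dd X f (j - 1 - (n:ℤ))| ≤ M₂ / 2 := this
        _ < P := hPbig
  rcases le_or_gt P (M₂ / 2) with hp | hp
  · -- Q dominates: use second disjunct
    have hQbig : M₂ / 2 < Q := by linarith
    have hPQ2 : P < Q := by linarith
    right; left
    intro n h1 hn
    constructor
    · have hk : j + 1 ≤ j + (n : ℤ) := by
        have : (1:ℤ) ≤ (n:ℤ) := by exact_mod_cast h1
        omega
      have := hnb (j + (n : ℤ)) (Or.inl hk)
      calc |Dd X f (j + (n:ℤ))| ≤ M₂ / 2 := this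
        _ < Q := hQbig
    · rcases eq_or_lt_of_le h1 with rfl | h2
      · rw [show (j - ((1:ℕ):ℤ)) = j - 1 by push_cast; ring]
        exact hPQ2
      · have hk : j - (n : ℤ) ≤ j - 2 := by
          have : (2:ℤ) ≤ (n:ℤ) := by exact_mod_cast h2
          omega
        have := hnb (j - (n : ℤ)) (Or.inr hk)
        calc |Dd X f (j - (n:ℤ))| ≤ M₂ / 2 := this
          _ < Q := hQbig
  · -- both large: use third disjunct
    right; right
    constructor
    · intro n h1 hn
      have hk : j + 1 ≤ j + (n : ℤ) := by
        have : (1:ℤ) ≤ (n:ℤ) := by exact_mod_cast h1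
        omega
      calc |Dd X f (j + (n:ℤ))| ≤ M₂ / 2 := hnb _ (Or.inl hk)
        _ < Q := hq
    · intro n h1 hn
      have hk : j - 1 - (n : ℤ) ≤ j - 2 := by
        have : (1:ℤ) ≤ (n:ℤ) := by exact_mod_cast h1
        omega
      calc |Dd X f (j - 1 - (n:ℤ))| ≤ M₂ / 2 := hnb _ (Or.inr hk)
        _ < P := hp
end

section
/- Let f: ℝ → ℝ be continuous on ℝ, C² on ℝ∖{μ} with bounded second derivative there, with jump [f'] := f'(μ⁺) − f'(μ⁻) ≠ 0, and suppose μ ∈ [x_j, x_{j+1}] and h_max < h_c := |[f']|/(4 M₂) with M₂ := sup_{ℝ∖{μ}} |f''|. If (x_{j+1}−μ)/(h_j+h_{j+1}) − (μ−x_j)/(h_{j+1}+h_{j+2}) > 1/4, then both I_{j−1} = [x_{j−1},x_j] and I_j = [x_j,x_{j+1}] are labeled B; symmetrically, if (μ−x_j)/(h_{j+1}+h_{j+2}) − (x_{j+1}−μ)/(h_j+h_{j+1}) > 1/4, then both I_j and I_{j+1} = [x_{j+1},x_{j+2}] are labeled B. -/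
open Set Filter

noncomputable def Faux (f : ℝ → ℝ) (μ cc : ℝ) : ℝ → ℝ := fun x => f x - cc * max (x - μ) 0

noncomputable def Fdaux (f' : ℝ → ℝ) (μ dL cc : ℝ) : ℝ → ℝ :=
  fun x => if x < μ then f' x else if μ < x then f' x - cc else dL

lemma Faux_hasDerivAt {f f' : ℝ → ℝ} {μ dL dR : ℝ}
    (hd1 : ∀ x ≠ μ, HasDerivAt f (f' x) x)
    (hdL : HasDerivWithinAt f dL (Set.Iic μ) μ)
    (hdR : HasDerivWithinAt f dR (Set.Ici μ) μ) :
    ∀ x, HasDerivAt (Faux f μ (dR - dL)) (Fdaux f' μ dL (dR - dL) x) x := by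
  intro x
  rcases lt_trichotomy x μ with hx | hx | hx
  · have hev : Faux f μ (dR - dL) =ᶠ[nhds x] f := by
      filter_upwards [Iio_mem_nhds hx] with t ht
      have : t - μ ≤ 0 := by simp only [mem_Iio] at ht; linarith
      simp [Faux, max_eq_right this]
    rw [Fdaux, if_pos hx]
    exact hev.hasDerivAt_iff.mpr (hd1 x (ne_of_lt hx))
  · subst hx
    have hL : HasDerivWithinAt (Faux f x (dR - dL)) dL (Set.Iic x) x := by
      apply hdL.congr
      · intro t ht
        have : t - x ≤ 0 := by simp only [mem_Iic] at ht; linarith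
        simp [Faux, max_eq_right this]
      · simp [Faux]
    have hR : HasDerivWithinAt (Faux f x (dR - dL)) dL (Set.Ici x) x := by
      have hlin : HasDerivWithinAt (fun t => f t - (dR - dL) * (t - x)) (dR - (dR - dL) * 1)
          (Set.Ici x) x :=
        hdR.sub ((((hasDerivAt_id x).sub_const x).hasDerivWithinAt).const_mul (dR - dL))
      have : HasDerivWithinAt (Faux f x (dR - dL)) (dR - (dR - dL) * 1) (Set.Ici x) x := by
        apply hlin.congr
        · intro t ht
          have : (0:ℝ) ≤ t - x := by simp only [mem_Ici] at ht; linarith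
          simp [Faux, max_eq_left this]
        · simp [Faux]
      convert this using 1; ring
    have := hL.union hR
    rw [Iic_union_Ici] at this
    rw [Fdaux]; simp only [lt_irrefl, if_neg]
    simpa using hasDerivWithinAt_univ.mp this
  · have hev : Faux f μ (dR - dL) =ᶠ[nhds x] (fun t => f t - (dR - dL) * (t - μ)) := by
      filter_upwards [Ioi_mem_nhds hx] with t ht
      have : (0:ℝ) ≤ t - μ := by simp only [mem_Ioi] at ht; linarith
      simp [Faux, max_eq_left this]
    have hlin : HasDerivAt (fun t => f t - (dR - dL) * (t - μ)) (f' x - (dR - dL) * 1) x :=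
      (hd1 x (ne_of_gt hx)).sub (((hasDerivAt_id x).sub_const μ).const_mul (dR - dL))
    rw [Fdaux]; rw [if_neg (not_lt.mpr (le_of_lt hx)), if_pos hx]
    have := hev.hasDerivAt_iff.mpr hlin
    exact this.congr_deriv (by ring)

lemma psid_mono {f f' f'' : ℝ → ℝ} {μ dL dR M₂ : ℝ}
    (hf : Continuous f)
    (hd1 : ∀ x ≠ μ, HasDerivAt f (f' x) x)
    (hd2 : ∀ x ≠ μ, HasDerivAt f' (f'' x) x)
    (hM : ∀ x ≠ μ, -M₂ ≤ f'' x)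
    (hM0 : 0 ≤ M₂)
    (hdL : HasDerivWithinAt f dL (Set.Iic μ) μ)
    (hdR : HasDerivWithinAt f dR (Set.Ici μ) μ) :
    Monotone (fun x => Fdaux f' μ dL (dR - dL) x + M₂ * x) := by
  set cc := dR - dL with hcc
  set ψd : ℝ → ℝ := fun x => Fdaux f' μ dL cc x + M₂ * x with hψd
  -- monotone strictly below μ
  have hmonoIio : ∀ x y : ℝ, x < y → y < μ → ψd x ≤ ψd y := by
    intro x y hxy hyμ
    have hder : ∀ t ∈ Icc x y, HasDerivAt ψd (f'' t + M₂) t := by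
      intro t ht
      have htμ : t < μ := lt_of_le_of_lt ht.2 hyμ
      have hev : ψd =ᶠ[nhds t] (fun s => f' s + M₂ * s) := by
        filter_upwards [Iio_mem_nhds htμ] with s hs
        simp only [mem_Iio] at hs
        simp [hψd, Fdaux, if_pos hs]
      have h2 : HasDerivAt (fun s => f' s + M₂ * s) (f'' t + M₂ * 1) t :=
        (hd2 t (ne_of_lt htμ)).add ((hasDerivAt_id t).const_mul M₂)
      rw [hev.hasDerivAt_iff]
      exact h2.congr_deriv (by ring)
    have hcont : ContinuousOn ψd (Icc x y) :=
      fun t ht => ((hder t ht).continuousAt).continuousWithinAt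
    obtain ⟨ξ, hξ, hξeq⟩ := exists_hasDerivAt_eq_slope ψd (fun t => f'' t + M₂) hxy hcont
      (fun t ht => hder t (Ioo_subset_Icc_self ht))
    have hξμ : ξ < μ := lt_of_le_of_lt hξ.2.le hyμ
    have hnn : 0 ≤ f'' ξ + M₂ := by have := hM ξ (ne_of_lt hξμ); linarith
    have hpos : (0:ℝ) < y - x := by linarith
    have h3 : 0 ≤ (ψd y - ψd x) / (y - x) := hξeq ▸ hnn
    have h4 := (le_div_iff₀ hpos).mp h3
    linarith
  -- monotone strictly above μ
  have hmonoIoi : ∀ x y : ℝ, μ < x → x < y → ψd x ≤ ψd y := by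
    intro x y hμx hxy
    have hder : ∀ t ∈ Icc x y, HasDerivAt ψd (f'' t + M₂) t := by
      intro t ht
      have htμ : μ < t := lt_of_lt_of_le hμx ht.1
      have hev : ψd =ᶠ[nhds t] (fun s => (f' s - cc) + M₂ * s) := by
        filter_upwards [Ioi_mem_nhds htμ] with s hs
        simp only [mem_Ioi] at hs
        simp [hψd, Fdaux, if_neg (not_lt.mpr (le_of_lt hs)), if_pos hs]
      have h2 : HasDerivAt (fun s => (f' s - cc) + M₂ * s) (f'' t + M₂ * 1) t := by
        have := ((hd2 t (ne_of_gt htμ)).sub_const cc).add ((hasDerivAt_id t).const_mul M₂)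
        exact this
      rw [hev.hasDerivAt_iff]
      exact h2.congr_deriv (by ring)
    have hcont : ContinuousOn ψd (Icc x y) :=
      fun t ht => ((hder t ht).continuousAt).continuousWithinAt
    obtain ⟨ξ, hξ, hξeq⟩ := exists_hasDerivAt_eq_slope ψd (fun t => f'' t + M₂) hxy hcont
      (fun t ht => hder t (Ioo_subset_Icc_self ht))
    have hξμ : μ < ξ := lt_of_lt_of_le hμx hξ.1.le
    have hnn : 0 ≤ f'' ξ + M₂ := by have := hM ξ (ne_of_gt hξμ); linarith
    have hpos : (0:ℝ) < y - x := by linarith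
    have h3 : 0 ≤ (ψd y - ψd x) / (y - x) := hξeq ▸ hnn
    have h4 := (le_div_iff₀ hpos).mp h3
    linarith
  have hψdμ : ψd μ = dL + M₂ * μ := by simp [hψd, Fdaux]
  -- left slope limit
  have hslopeL : Tendsto (slope f μ) (nhdsWithin μ (Iio μ)) (nhds dL) := by
    have := hasDerivWithinAt_iff_tendsto_slope.mp hdL
    rwa [Iic_diff_right] at this
  have hslopeR : Tendsto (slope f μ) (nhdsWithin μ (Ioi μ)) (nhds dR) := by
    have := hasDerivWithinAt_iff_tendsto_slope.mp hdR
    rwa [Ici_sdiff_left] at this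
  -- left bridge
  have hbL : ∀ x : ℝ, x < μ → ψd x ≤ dL + M₂ * μ := by
    intro x hx
    have hev : ∀ᶠ t in nhdsWithin μ (Iio μ), ψd x - M₂ * μ ≤ slope f μ t := by
      filter_upwards [Ioo_mem_nhdsLT_of_mem (⟨hx, le_refl μ⟩ : μ ∈ Ioc x μ)] with t ht
      obtain ⟨hxt, htμ⟩ := ht
      obtain ⟨ξ, hξ, hξeq⟩ := exists_hasDerivAt_eq_slope f f' htμ hf.continuousOn
        (fun s hs => hd1 s (ne_of_lt hs.2))
      have hψx : ψd x ≤ ψd ξ := hmonoIio x ξ (lt_trans hxt hξ.1) hξ.2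
      have hψξ : ψd ξ = f' ξ + M₂ * ξ := by simp [hψd, Fdaux, if_pos hξ.2]
      have hsl : slope f μ t = f' ξ := by
        rw [slope_comm, slope_def_field]
        exact hξeq.symm
      rw [hsl]
      have : M₂ * ξ ≤ M₂ * μ := by nlinarith [hξ.2]
      linarith [hψx, hψξ ▸ hψx]
    have := ge_of_tendsto hslopeL hev
    linarith
  -- right bridge
  have hbR : ∀ y : ℝ, μ < y → dL + M₂ * μ ≤ ψd y := by
    intro y hy
    have hev : ∀ᶠ t in nhdsWithin μ (Ioi μ), slope f μ t ≤ ψd y + cc - M₂ * μ := by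
      filter_upwards [Ioo_mem_nhdsGT_of_mem (⟨le_refl μ, hy⟩ : μ ∈ Ico μ y)] with t ht
      obtain ⟨hμt, hty⟩ := ht
      obtain ⟨ξ, hξ, hξeq⟩ := exists_hasDerivAt_eq_slope f f' hμt hf.continuousOn
        (fun s hs => hd1 s (ne_of_gt hs.1))
      have hψx : ψd ξ ≤ ψd y := hmonoIoi ξ y hξ.1 (lt_trans hξ.2 hty)
      have hψξ : ψd ξ = (f' ξ - cc) + M₂ * ξ := by
        simp [hψd, Fdaux, if_neg (not_lt.mpr (le_of_lt hξ.1)), if_pos hξ.1]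
      have hsl : slope f μ t = f' ξ := by
        rw [slope_def_field]; exact hξeq.symm
      rw [hsl]
      have : M₂ * μ ≤ M₂ * ξ := by nlinarith [hξ.1]
      linarith [hψξ ▸ hψx]
    have := le_of_tendsto hslopeR hev
    have hcceq : dR - cc = dL := by rw [hcc]; ring
    linarith
  -- combine
  intro x y hxy
  rcases eq_or_lt_of_le hxy with rfl | hlt
  · exact le_refl _
  · rcases lt_trichotomy y μ with hyμ | rfl | hμy
    · exact hmonoIio x y hlt hyμ
    · rw [hψdμ]; exact hbL x hlt
    · rcases lt_trichotomy x μ with hxμ | rfl | hμx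
      · exact le_trans (hbL x hxμ) (hbR y hμy)
      · rw [hψdμ]; exact hbR y hμy
      · exact hmonoIoi x y hμx hlt

lemma aux_slope {f f' f'' : ℝ → ℝ} {μ dL dR M₂ : ℝ}
    (hf : Continuous f)
    (hd1 : ∀ x ≠ μ, HasDerivAt f (f' x) x)
    (hd2 : ∀ x ≠ μ, HasDerivAt f' (f'' x) x)
    (hM : ∀ x ≠ μ, -M₂ ≤ f'' x)
    (hM0 : 0 ≤ M₂)
    (hdL : HasDerivWithinAt f dL (Set.Iic μ) μ)
    (hdR : HasDerivWithinAt f dR (Set.Ici μ) μ) :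
    ∀ a b c : ℝ, a < b → b < c →
      (Faux f μ (dR - dL) b - Faux f μ (dR - dL) a) / (b - a)
        ≤ (Faux f μ (dR - dL) c - Faux f μ (dR - dL) b) / (c - b) + M₂ / 2 * (c - a) := by
  intro a b c hab hbc
  set F : ℝ → ℝ := Faux f μ (dR - dL) with hF
  set ψd : ℝ → ℝ := fun x => Fdaux f' μ dL (dR - dL) x + M₂ * x with hψd
  set ψ : ℝ → ℝ := fun x => F x + M₂ / 2 * x ^ 2 with hψ
  have hder : ∀ x : ℝ, HasDerivAt ψ (ψd x) x := by
    intro x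
    have := (Faux_hasDerivAt hd1 hdL hdR x).add ((hasDerivAt_pow 2 x).const_mul (M₂ / 2))
    exact this.congr_deriv (by simp only [hψd]; norm_num; ring)
  have hcont : ∀ u v : ℝ, ContinuousOn ψ (Icc u v) :=
    fun u v t _ => (hder t).continuousAt.continuousWithinAt
  obtain ⟨ξ₁, hξ₁, e1⟩ := exists_hasDerivAt_eq_slope ψ ψd hab (hcont a b)
    (fun t _ => hder t)
  obtain ⟨ξ₂, hξ₂, e2⟩ := exists_hasDerivAt_eq_slope ψ ψd hbc (hcont b c)
    (fun t _ => hder t)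
  have hmono := psid_mono hf hd1 hd2 hM hM0 hdL hdR
  have hle : ψd ξ₁ ≤ ψd ξ₂ := hmono (le_of_lt (lt_trans hξ₁.2 hξ₂.1))
  rw [e1, e2] at hle
  have hba : b - a ≠ 0 := by linarith
  have hcb : c - b ≠ 0 := by linarith
  have i1 : (ψ b - ψ a) / (b - a) = (F b - F a) / (b - a) + M₂ / 2 * (b + a) := by
    rw [hψ]; field_simp; ring
  have i2 : (ψ c - ψ b) / (c - b) = (F c - F b) / (c - b) + M₂ / 2 * (c + b) := by
    rw [hψ]; field_simp; ring
  have i3 : M₂ / 2 * (c + b) = M₂ / 2 * (b + a) + M₂ / 2 * (c - a) := by ring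
  linarith [i1 ▸ i2 ▸ hle]

lemma abs_DD_le {F : ℝ → ℝ} {M₂ a b c : ℝ} (hab : a < b) (hbc : b < c)
    (h1 : (F b - F a) / (b - a) ≤ (F c - F b) / (c - b) + M₂ / 2 * (c - a))
    (h2 : (F c - F b) / (c - b) ≤ (F b - F a) / (b - a) + M₂ / 2 * (c - a)) :
    |F a / ((b - a) * (c - a)) - F b / ((b - a) * (c - b)) + F c / ((c - b) * (c - a))|
      ≤ M₂ / 2 := by
  have hba : (0:ℝ) < b - a := by linarith
  have hcb : (0:ℝ) < c - b := by linarith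
  have hca : (0:ℝ) < c - a := by linarith
  have heq : F a / ((b - a) * (c - a)) - F b / ((b - a) * (c - b)) + F c / ((c - b) * (c - a))
      = ((F c - F b) / (c - b) - (F b - F a) / (b - a)) / (c - a) := by
    field_simp; ring
  rw [heq, abs_div, abs_of_pos hca, div_le_iff₀ hca]
  exact abs_sub_le_iff.mpr ⟨by linarith, by linarith⟩

lemma isB_pair (D : ℤ → ℝ) (m : ℕ) (i0 : ℤ)
    (h : ∀ k : ℤ, k ≠ i0 → |D k| < |D i0|) :
    isB D m i0 ∧ isB D m (i0 + 1) := by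
  constructor
  · right; left
    intro n h1 _
    have hn : (1:ℤ) ≤ (n:ℤ) := by exact_mod_cast h1
    exact ⟨h _ (by omega), h _ (by omega)⟩
  · left
    intro n h1 _
    have hn : (1:ℤ) ≤ (n:ℤ) := by exact_mod_cast h1
    have e : i0 + 1 - 1 = i0 := by ring
    rw [e]
    exact ⟨h _ (by omega), h _ (by omega)⟩

noncomputable def Gaux (μ : ℝ) : ℝ → ℝ := fun x => max (x - μ) 0

/-- If `h_max < h_c` and `μ` is close enough to one of the extremes of `[x_j,x_{j+1}]`
in the sense of the stated inequalities, then the corresponding adjacent interval is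
also labeled `B`. -/
theorem statement2 (m : ℕ) (hm : 2 ≤ m)
    (X : ℤ → ℝ) (hX : StrictMono X) (hmax : ℝ)
    (hhi : ∀ i : ℤ, X i - X (i - 1) ≤ hmax)
    (f f' f'' : ℝ → ℝ) (μ : ℝ)
    (hf : Continuous f)
    (hd1 : ∀ x ≠ μ, HasDerivAt f (f' x) x)
    (hd2 : ∀ x ≠ μ, HasDerivAt f' (f'' x) x)
    (hc2 : ContinuousOn f'' {μ}ᶜ)
    (M₂ : ℝ) (hM : ∀ x ≠ μ, |f'' x| ≤ M₂)
    (dL dR : ℝ)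
    (hdL : HasDerivWithinAt f dL (Set.Iic μ) μ)
    (hdR : HasDerivWithinAt f dR (Set.Ici μ) μ)
    (hjump : dR - dL ≠ 0)
    (j : ℤ) (hμ : μ ∈ Set.Icc (X j) (X (j + 1)))
    (hcrit : hmax < |dR - dL| / (4 * M₂)) :
    ((X (j + 1) - μ) / (X (j + 1) - X (j - 1)) - (μ - X j) / (X (j + 2) - X j) > 1 / 4 →
      isB (Dd X f) m (j - 1) ∧ isB (Dd X f) m j) ∧
    ((μ - X j) / (X (j + 2) - X j) - (X (j + 1) - μ) / (X (j + 1) - X (j - 1)) > 1 / 4 →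
      isB (Dd X f) m j ∧ isB (Dd X f) m (j + 1)) := by
  obtain ⟨hμ1, hμ2⟩ := hμ
  have hM0 : 0 ≤ M₂ := le_trans (abs_nonneg _) (hM (μ + 1) (ne_of_gt (lt_add_one μ)))
  have hmax0 : 0 < hmax := by
    have h10 := hhi 1
    have h01 : X 0 < X 1 := hX (by norm_num)
    norm_num at h10
    linarith
  have hM2 : 0 < M₂ := by
    rcases hM0.eq_or_lt with h | h
    · exfalso; rw [← h] at hcrit; norm_num at hcrit; linarith
    · exact h
  have hC : 0 < |dR - dL| := abs_pos.mpr hjump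
  have hkey : 4 * M₂ * hmax < |dR - dL| := by
    rw [lt_div_iff₀ (by positivity)] at hcrit
    calc 4 * M₂ * hmax = hmax * (4 * M₂) := by ring
    _ < |dR - dL| := hcrit
  have h01 : X (j - 1) < X j := hX (by omega)
  have h12 : X j < X (j + 1) := hX (by omega)
  have h23 : X (j + 1) < X (j + 2) := hX (by omega)
  have hh1 : X (j + 1) - X j ≤ hmax := by
    have := hhi (j + 1)
    have e : j + 1 - 1 = j := by ring
    rwa [e] at this
  have hkey2 : 4 * M₂ * (X (j + 1) - X j) < |dR - dL| := by nlinarith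
  -- bound on the smooth part
  have hFb : ∀ i : ℤ, |Dd X (Faux f μ (dR - dL)) i| ≤ M₂ / 2 := by
    intro i
    have hab : X i < X (i + 1) := hX (by omega)
    have hbc : X (i + 1) < X (i + 2) := hX (by omega)
    have h1 := aux_slope hf hd1 hd2 (fun x hx => (abs_le.mp (hM x hx)).1) hM0 hdL hdR
      (X i) (X (i + 1)) (X (i + 2)) hab hbc
    have h2' := aux_slope (f := fun x => -f x) (f' := fun x => -f' x) (f'' := fun x => -f'' x)
      (μ := μ) (dL := -dL) (dR := -dR) (M₂ := M₂)
      hf.neg (fun x hx => (hd1 x hx).neg) (fun x hx => (hd2 x hx).neg)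
      (fun x hx => by have := (abs_le.mp (hM x hx)).2; show -M₂ ≤ -f'' x; linarith) hM0 hdL.neg hdR.neg
      (X i) (X (i + 1)) (X (i + 2)) hab hbc
    have hneg : ∀ x : ℝ, Faux (fun y => -f y) μ (-dR - -dL) x = -(Faux f μ (dR - dL) x) := by
      intro x; simp only [Faux]; ring
    rw [hneg, hneg, hneg] at h2'
    have h2 : (Faux f μ (dR - dL) (X (i + 2)) - Faux f μ (dR - dL) (X (i + 1)))
        / (X (i + 2) - X (i + 1))
        ≤ (Faux f μ (dR - dL) (X (i + 1)) - Faux f μ (dR - dL) (X i)) / (X (i + 1) - X i)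
          + M₂ / 2 * (X (i + 2) - X i) := by
      have e1 : (-Faux f μ (dR - dL) (X (i + 1)) - -Faux f μ (dR - dL) (X i))
          / (X (i + 1) - X i)
          = -((Faux f μ (dR - dL) (X (i + 1)) - Faux f μ (dR - dL) (X i))
            / (X (i + 1) - X i)) := by ring
      have e2 : (-Faux f μ (dR - dL) (X (i + 2)) - -Faux f μ (dR - dL) (X (i + 1)))
          / (X (i + 2) - X (i + 1))
          = -((Faux f μ (dR - dL) (X (i + 2)) - Faux f μ (dR - dL) (X (i + 1)))
            / (X (i + 2) - X (i + 1))) := by ring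
      rw [e1, e2] at h2'
      linarith
    exact abs_DD_le hab hbc h1 h2
  -- linearity split
  have hsplit : ∀ i : ℤ, Dd X f i
      = Dd X (Faux f μ (dR - dL)) i + (dR - dL) * Dd X (Gaux μ) i := by
    intro i; simp only [Dd, Faux, Gaux]; ring
  -- divided differences of the kink part
  have hGzero : ∀ k : ℤ, k ≠ j - 1 → k ≠ j → Dd X (Gaux μ) k = 0 := by
    intro k hk1 hk2
    rcases lt_or_ge k (j - 1) with hlt | hge
    · have l0 : X k ≤ X j := hX.monotone (by omega)
      have l1 : X (k + 1) ≤ X j := hX.monotone (by omega)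
      have l2 : X (k + 2) ≤ X j := hX.monotone (by omega)
      simp only [Dd, Gaux]
      rw [max_eq_right (by linarith : X k - μ ≤ 0),
        max_eq_right (by linarith : X (k + 1) - μ ≤ 0),
        max_eq_right (by linarith : X (k + 2) - μ ≤ 0)]
      simp
    · have l0 : X (j + 1) ≤ X k := hX.monotone (by omega)
      have hab : X k < X (k + 1) := hX (by omega)
      have hbc : X (k + 1) < X (k + 2) := hX (by omega)
      simp only [Dd, Gaux]
      rw [max_eq_left (by linarith : (0:ℝ) ≤ X k - μ),
        max_eq_left (by linarith : (0:ℝ) ≤ X (k + 1) - μ),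
        max_eq_left (by linarith : (0:ℝ) ≤ X (k + 2) - μ)]
      have n1 : X (k + 1) - X k ≠ 0 := by linarith
      have n2 : X (k + 2) - X (k + 1) ≠ 0 := by linarith
      have n3 : X (k + 2) - X k ≠ 0 := by linarith
      field_simp
      ring
  have hGjm1 : Dd X (Gaux μ) (j - 1)
      = (X (j + 1) - μ) / ((X (j + 1) - X j) * (X (j + 1) - X (j - 1))) := by
    simp only [Dd, Gaux, show j - 1 + 1 = j from by ring, show j - 1 + 2 = j + 1 from by ring]
    rw [max_eq_right (by linarith : X (j - 1) - μ ≤ 0),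
      max_eq_right (by linarith : X j - μ ≤ 0),
      max_eq_left (by linarith : (0:ℝ) ≤ X (j + 1) - μ)]
    ring
  have hGj : Dd X (Gaux μ) j
      = (μ - X j) / ((X (j + 1) - X j) * (X (j + 2) - X j)) := by
    simp only [Dd, Gaux]
    rw [max_eq_right (by linarith : X j - μ ≤ 0),
      max_eq_left (by linarith : (0:ℝ) ≤ X (j + 1) - μ),
      max_eq_left (by linarith : (0:ℝ) ≤ X (j + 2) - μ)]
    have n1 : X (j + 1) - X j ≠ 0 := by linarith
    have n2 : X (j + 2) - X (j + 1) ≠ 0 := by linarith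
    have n3 : X (j + 2) - X j ≠ 0 := by linarith
    field_simp
    ring
  -- abbreviations
  set C := |dR - dL| with hCdef
  set A := (X (j + 1) - μ) / ((X (j + 1) - X j) * (X (j + 1) - X (j - 1))) with hAdef
  set B := (μ - X j) / ((X (j + 1) - X j) * (X (j + 2) - X j)) with hBdef
  have hA0 : 0 ≤ A := by
    rw [hAdef]
    exact div_nonneg (by linarith) (le_of_lt (mul_pos (by linarith) (by linarith)))
  have hB0 : 0 ≤ B := by
    rw [hBdef]
    exact div_nonneg (by linarith) (le_of_lt (mul_pos (by linarith) (by linarith)))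
  have n1 : X (j + 1) - X j ≠ 0 := by linarith
  have n2 : X (j + 1) - X (j - 1) ≠ 0 := by linarith
  have n3 : X (j + 2) - X j ≠ 0 := by linarith
  have hAe : A = ((X (j + 1) - μ) / (X (j + 1) - X (j - 1))) * (1 / (X (j + 1) - X j)) := by
    rw [hAdef, div_mul_div_comm, mul_one, mul_comm (X (j + 1) - X j)]
  have hBe : B = ((μ - X j) / (X (j + 2) - X j)) * (1 / (X (j + 1) - X j)) := by
    rw [hBdef, div_mul_div_comm, mul_one, mul_comm (X (j + 1) - X j)]
  have hMC : M₂ < C * (1 / 4) * (1 / (X (j + 1) - X j)) := by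
    have t : M₂ * (4 * (X (j + 1) - X j)) < C := by
      calc M₂ * (4 * (X (j + 1) - X j)) = 4 * M₂ * (X (j + 1) - X j) := by ring
      _ < C := hkey2
    have := (lt_div_iff₀ (by linarith : (0:ℝ) < 4 * (X (j + 1) - X j))).mpr t
    calc M₂ < C / (4 * (X (j + 1) - X j)) := this
    _ = C * (1 / 4) * (1 / (X (j + 1) - X j)) := by rw [div_eq_mul_inv, mul_inv]; ring
  -- common bounds
  have hsjm1 := hsplit (j - 1)
  rw [hGjm1] at hsjm1
  have hsj := hsplit j
  rw [hGj] at hsj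
  have hlow1 : C * A - M₂ / 2 ≤ |Dd X f (j - 1)| := by
    have t := abs_sub_abs_le_abs_sub ((dR - dL) * A) (-(Dd X (Faux f μ (dR - dL)) (j - 1)))
    rw [abs_neg, sub_neg_eq_add, add_comm] at t
    have habs : |(dR - dL) * A| = C * A := by
      rw [abs_mul, abs_of_nonneg hA0, hCdef]
    rw [habs] at t
    rw [hsjm1]
    have := hFb (j - 1)
    linarith
  have hup1 : |Dd X f (j - 1)| ≤ M₂ / 2 + C * A := by
    rw [hsjm1]
    have t := abs_add_le (Dd X (Faux f μ (dR - dL)) (j - 1)) ((dR - dL) * A)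
    have habs : |(dR - dL) * A| = C * A := by rw [abs_mul, abs_of_nonneg hA0, hCdef]
    have := hFb (j - 1)
    linarith [habs ▸ t]
  have hlow2 : C * B - M₂ / 2 ≤ |Dd X f j| := by
    have t := abs_sub_abs_le_abs_sub ((dR - dL) * B) (-(Dd X (Faux f μ (dR - dL)) j))
    rw [abs_neg, sub_neg_eq_add, add_comm] at t
    have habs : |(dR - dL) * B| = C * B := by
      rw [abs_mul, abs_of_nonneg hB0, hCdef]
    rw [habs] at t
    rw [hsj]
    have := hFb j
    linarith
  have hup2 : |Dd X f j| ≤ M₂ / 2 + C * B := by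
    rw [hsj]
    have t := abs_add_le (Dd X (Faux f μ (dR - dL)) j) ((dR - dL) * B)
    have habs : |(dR - dL) * B| = C * B := by
      rw [abs_mul, abs_of_nonneg hB0, hCdef]
    have := hFb j
    linarith [habs ▸ t]
  have hother : ∀ k : ℤ, k ≠ j - 1 → k ≠ j → |Dd X f k| ≤ M₂ / 2 := by
    intro k hk1 hk2
    rw [hsplit k, hGzero k hk1 hk2, mul_zero, add_zero]
    exact hFb k
  have hCB0 : 0 ≤ C * B := mul_nonneg (le_of_lt hC) hB0
  have hCA0 : 0 ≤ C * A := mul_nonneg (le_of_lt hC) hA0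
  constructor
  · intro hyp1
    have hCAB : M₂ < C * A - C * B := by
      have t1 : C * (1 / 4) * (1 / (X (j + 1) - X j))
          < C * ((X (j + 1) - μ) / (X (j + 1) - X (j - 1))
              - (μ - X j) / (X (j + 2) - X j)) * (1 / (X (j + 1) - X j)) := by
        apply mul_lt_mul_of_pos_right _ (one_div_pos.mpr (by linarith))
        exact mul_lt_mul_of_pos_left hyp1 hC
      have t2 : C * A - C * B = C * ((X (j + 1) - μ) / (X (j + 1) - X (j - 1))
          - (μ - X j) / (X (j + 2) - X j)) * (1 / (X (j + 1) - X j)) := by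
        rw [hAe, hBe]; ring
      linarith
    have hdom : ∀ k : ℤ, k ≠ j - 1 → |Dd X f k| < |Dd X f (j - 1)| := by
      intro k hk
      rcases eq_or_ne k j with rfl | hkj
      · linarith
      · have := hother k hk hkj; linarith
    obtain ⟨b1, b2⟩ := isB_pair (Dd X f) m (j - 1) hdom
    refine ⟨b1, ?_⟩
    have e : j - 1 + 1 = j := by ring
    rwa [e] at b2
  · intro hyp2
    have hCBA : M₂ < C * B - C * A := by
      have t1 : C * (1 / 4) * (1 / (X (j + 1) - X j))
          < C * ((μ - X j) / (X (j + 2) - X j)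
              - (X (j + 1) - μ) / (X (j + 1) - X (j - 1))) * (1 / (X (j + 1) - X j)) := by
        apply mul_lt_mul_of_pos_right _ (one_div_pos.mpr (by linarith))
        exact mul_lt_mul_of_pos_left hyp2 hC
      have t2 : C * B - C * A = C * ((μ - X j) / (X (j + 2) - X j)
          - (X (j + 1) - μ) / (X (j + 1) - X (j - 1))) * (1 / (X (j + 1) - X j)) := by
        rw [hAe, hBe]; ring
      linarith
    have hdom : ∀ k : ℤ, k ≠ j → |Dd X f k| < |Dd X f j| := by
      intro k hk
      rcases eq_or_ne k (j - 1) with rfl | hkj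
      · linarith
      · have := hother k hkj hk; linarith
    exact isB_pair (Dd X f) m j hdom
end

section
/- Let X be a σ quasi-uniform grid, fix j, and define f₊(x) = 0 for x ≤ x_j and f₊(x) = (x−x_j)(x−x_{j+1}) for x > x_j, and f₋(x) = 0 for x ≤ x_{j+1} and f₋(x) = (x−x_j)(x−x_{j+1}) for x > x_{j+1}. Then for every function g: ℝ → ℝ, max( ‖f₊ − g‖_{L∞}, ‖f₋ − g‖_{L∞} ) ≥ h_{j+1}²/8 ≥ h²/(8σ²), where h := h_max and h_{j+1} := x_{j+1} − x_j. In particular, since the second derivatives of f₊ and f₋ away from their corner points equal 0 or 2, no approximation procedure depending only on the grid values (f(x_i))_{i∈ℤ} can achieve an error bound of the form C h^m sup_{ℝ∖{corner}} |f^{(m)}| with m > 2 for both f₊ and f₋. -/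
/-- `f₊(x) = 0` for `x ≤ x_j` and `f₊(x) = (x − x_j)(x − x_{j+1})` for `x > x_j`. -/
noncomputable def fPlus (X : ℤ → ℝ) (j : ℤ) (x : ℝ) : ℝ :=
  if x ≤ X j then 0 else (x - X j) * (x - X (j + 1))

/-- `f₋(x) = 0` for `x ≤ x_{j+1}` and `f₋(x) = (x − x_j)(x − x_{j+1})` for `x > x_{j+1}`. -/
noncomputable def fMinus (X : ℤ → ℝ) (j : ℤ) (x : ℝ) : ℝ :=
  if x ≤ X (j + 1) then 0 else (x - X j) * (x - X (j + 1))

/-- For any function `g`, `max(‖f₊ − g‖_∞, ‖f₋ − g‖_∞) ≥ h_{j+1}²/8 ≥ h²/(8σ²)`: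
whenever `cp` is a uniform bound for `|f₊ − g|` and `cm` one for `|f₋ − g|`, the
maximum of the two bounds is at least `h_{j+1}²/8`, which in turn is at least
`h_max²/(8σ²)` on a `σ` quasi-uniform grid. -/
theorem statement5 (X : ℤ → ℝ) (hX : StrictMono X)
    (σ hmin hmax : ℝ) (h0 : 0 < hmin)
    (hlo : ∀ i : ℤ, hmin ≤ X i - X (i - 1))
    (hhi : ∀ i : ℤ, X i - X (i - 1) ≤ hmax)
    (hσ : hmax / hmin ≤ σ) (j : ℤ)
    (g : ℝ → ℝ) (cp cm : ℝ)
    (hcp : ∀ x : ℝ, |fPlus X j x - g x| ≤ cp)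
    (hcm : ∀ x : ℝ, |fMinus X j x - g x| ≤ cm) :
    (X (j + 1) - X j) ^ 2 / 8 ≤ max cp cm ∧
    hmax ^ 2 / (8 * σ ^ 2) ≤ (X (j + 1) - X j) ^ 2 / 8 := by
  set h : ℝ := X (j + 1) - X j with hh
  have hpos : 0 < h := sub_pos.2 (hX (by omega))
  have hminh : hmin ≤ h := by
    have := hlo (j + 1); simpa [hh] using this
  have hminmax : hmin ≤ hmax := le_trans (hlo 0) (hhi 0)
  have hσ1 : 1 ≤ σ := le_trans (by rw [le_div_iff₀ h0]; linarith) hσ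
  constructor
  · -- midpoint argument
    set m : ℝ := (X j + X (j + 1)) / 2 with hm
    have h1 : ¬ m ≤ X j := by simp only [hm]; push_neg; linarith
    have h2 : m ≤ X (j + 1) := by simp only [hm]; linarith
    have e1 : fPlus X j m = -(h ^ 2 / 4) := by
      simp only [fPlus, if_neg h1]; simp only [hm, hh]; ring
    have e2 : fMinus X j m = 0 := by simp only [fMinus, if_pos h2]
    have t1 := hcp m
    have t2 := hcm m
    rw [e1] at t1; rw [e2] at t2
    have key : h ^ 2 / 4 ≤ cp + cm := by
      have h3 : |(-(h ^ 2 / 4) - g m) - (0 - g m)| = h ^ 2 / 4 := by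
        rw [show (-(h ^ 2 / 4) - g m) - (0 - g m) = -(h ^ 2 / 4) by ring, abs_neg,
          abs_of_nonneg (by positivity)]
      have h4 := abs_sub (-(h ^ 2 / 4) - g m) (0 - g m)
      rw [h3] at h4
      linarith
    have hcp' : cp ≤ max cp cm := le_max_left _ _
    have hcm' : cm ≤ max cp cm := le_max_right _ _
    linarith
  · have hmax' : hmax ≤ σ * h := by
      have : hmax ≤ σ * hmin := (div_le_iff₀ h0).1 hσ
      nlinarith
    have hmaxnn : 0 ≤ hmax := le_trans h0.le hminmax
    have hsq : hmax ^ 2 ≤ σ ^ 2 * h ^ 2 := by nlinarith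
    rw [div_le_div_iff₀ (by positivity) (by norm_num)]
    nlinarith
end

section
/- Let X be a strictly increasing grid, fix j, and define f₊(x) = 0 for x ≤ x_j and f₊(x) = (x−x_j)(x−x_{j+1}) for x > x_j, and f₋(x) = 0 for x ≤ x_{j+1} and f₋(x) = (x−x_j)(x−x_{j+1}) for x > x_{j+1}. Then f₊(x_i) = f₋(x_i) for every i ∈ ℤ, and ‖f₊ − f₋‖_{L∞(ℝ)} = h_{j+1}²/4, where h_{j+1} := x_{j+1} − x_j, the supremum being attained at the midpoint (x_j + x_{j+1})/2. -/
/-- `f₊` and `f₋` agree at every grid point, and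
`‖f₊ − f₋‖_{L∞(ℝ)} = h_{j+1}²/4`, the supremum being attained at the midpoint
`(x_j + x_{j+1})/2`. -/
theorem statement6 (X : ℤ → ℝ) (hX : StrictMono X) (j : ℤ) :
    (∀ i : ℤ, fPlus X j (X i) = fMinus X j (X i)) ∧
    (∀ x : ℝ, |fPlus X j x - fMinus X j x| ≤ (X (j + 1) - X j) ^ 2 / 4) ∧
    |fPlus X j ((X j + X (j + 1)) / 2) - fMinus X j ((X j + X (j + 1)) / 2)|
      = (X (j + 1) - X j) ^ 2 / 4 := by
  have hab : X j < X (j + 1) := hX (lt_add_one j)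
  refine ⟨?_, ?_, ?_⟩
  · intro i
    unfold fPlus fMinus
    rcases le_or_gt i j with hi | hi
    · have h1 : X i ≤ X j := hX.le_iff_le.mpr hi
      have h2 : X i ≤ X (j + 1) := h1.trans hab.le
      simp [h1, h2]
    · have h1 : ¬ X i ≤ X j := not_le.mpr (hX hi)
      rcases eq_or_lt_of_le (by omega : j + 1 ≤ i) with hi2 | hi2
      · subst hi2
        simp [h1]
      · have h2 : ¬ X i ≤ X (j + 1) := not_le.mpr (hX hi2)
        simp [h1, h2]
  · intro x
    unfold fPlus fMinus
    split_ifs with h1 h2 h2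
    · simp; positivity
    · exact absurd (h1.trans hab.le) h2
    · rw [sub_zero, abs_le]
      constructor <;> nlinarith [not_le.mp h1, sq_nonneg (2 * x - X j - X (j + 1))]
    · simp; positivity
  · unfold fPlus fMinus
    have h1 : ¬ (X j + X (j + 1)) / 2 ≤ X j := by push_neg; linarith
    have h2 : (X j + X (j + 1)) / 2 ≤ X (j + 1) := by linarith
    rw [if_neg h1, if_pos h2, sub_zero, abs_of_nonpos (by nlinarith)]
    ring
end

section
/- Let f: ℝ → ℝ be continuous on ℝ, C² on ℝ∖{μ} with bounded second derivative there, with jump [f'] := f'(μ⁺) − f'(μ⁻) ≠ 0, and suppose x_j ≤ μ ≤ (x_j + x_{j+1})/2. If h := h_max < h_c := |[f']|/(4 M₂) with M₂ := sup_{ℝ∖{μ}} |f''|, then |D_{j−1} f| > |D_i f| for every i ≤ j−2 and every i ≥ j+1. -/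
private lemma slope_mvt {G G' : ℝ → ℝ} {a b : ℝ} (hab : a < b)
    (hd : ∀ x, HasDerivAt G (G' x) x) :
    ∃ c ∈ Set.Ioo a b, G' c = (G b - G a) / (b - a) :=
  exists_hasDerivAt_eq_slope G G' hab
    (fun x _ => (hd x).continuousAt.continuousWithinAt)
    (fun x _ => hd x)

/-- The sharp `M/2` bound for second divided differences of a function whose
derivative is `M`-Lipschitz, via a convexity (parabola comparison) trick. -/
private lemma dd_abs_le (G G' : ℝ → ℝ) (M : ℝ)
    (hd : ∀ x, HasDerivAt G (G' x) x)
    (hlip : ∀ a b : ℝ, a ≤ b → |G' b - G' a| ≤ M * (b - a))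
    {a b c : ℝ} (hab : a < b) (hbc : b < c) :
    |((G c - G b) / (c - b) - (G b - G a) / (b - a)) / (c - a)| ≤ M / 2 := by
  have hba : b - a ≠ 0 := sub_ne_zero.mpr hab.ne'
  have hcb : c - b ≠ 0 := sub_ne_zero.mpr hbc.ne'
  have key : ∀ s : ℝ, s = 1 ∨ s = -1 →
      s * ((G c - G b) / (c - b)) - s * ((G b - G a) / (b - a)) ≤ M * (c - a) / 2 := by
    intro s hs
    have hdP : ∀ x, HasDerivAt (fun x => M / 2 * x ^ 2 - s * G x)
        (M * x - s * G' x) x := by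
      intro x
      have h1 : HasDerivAt (fun x : ℝ => M / 2 * x ^ 2) (M / 2 * ((2 : ℕ) * x ^ 1)) x :=
        (hasDerivAt_pow 2 x).const_mul (M / 2)
      have h2 : HasDerivAt (fun x => s * G x) (s * G' x) x := (hd x).const_mul s
      have := h1.sub h2
      refine this.congr_deriv ?_
      push_cast
      ring
    obtain ⟨p, hp, hpe⟩ := slope_mvt hab hdP
    obtain ⟨q, hq, hqe⟩ := slope_mvt hbc hdP
    have hpq : p ≤ q := (hp.2.trans hq.1).le
    have hmono : M * p - s * G' p ≤ M * q - s * G' q := by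
      have h := hlip p q hpq
      have hs' : s * (G' q - G' p) ≤ |G' q - G' p| := by
        rcases hs with h1 | h1 <;> subst h1
        · simpa using le_abs_self (G' q - G' p)
        · have := neg_abs_le (G' q - G' p); linarith
      nlinarith
    have e1 : ((M / 2 * b ^ 2 - s * G b) - (M / 2 * a ^ 2 - s * G a)) / (b - a)
        = M * (a + b) / 2 - s * ((G b - G a) / (b - a)) := by
      field_simp
      ring
    have e2 : ((M / 2 * c ^ 2 - s * G c) - (M / 2 * b ^ 2 - s * G b)) / (c - b)
        = M * (b + c) / 2 - s * ((G c - G b) / (c - b)) := by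
      field_simp
      ring
    rw [e1] at hpe
    rw [e2] at hqe
    have := hmono.trans_eq hqe
    have h2 := hpe.symm.trans_le hmono
    linarith
  have hca : (0:ℝ) < c - a := by linarith
  rw [abs_div, abs_of_pos hca, div_le_iff₀ hca]
  have k1 := key 1 (Or.inl rfl)
  have k2 := key (-1) (Or.inr rfl)
  rw [abs_le]
  constructor <;> nlinarith

private lemma dd_slope (X : ℤ → ℝ) (f : ℝ → ℝ) (i : ℤ)
    (h1 : X i < X (i + 1)) (h2 : X (i + 1) < X (i + 2)) :
    Dd X f i = ((f (X (i + 2)) - f (X (i + 1))) / (X (i + 2) - X (i + 1))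
      - (f (X (i + 1)) - f (X i)) / (X (i + 1) - X i)) / (X (i + 2) - X i) := by
  have d1 : X (i + 1) - X i ≠ 0 := sub_ne_zero.mpr h1.ne'
  have d2 : X (i + 2) - X (i + 1) ≠ 0 := sub_ne_zero.mpr h2.ne'
  have d3 : X (i + 2) - X i ≠ 0 := sub_ne_zero.mpr (h1.trans h2).ne'
  unfold Dd
  field_simp
  ring

/-- Interior Lipschitz estimate for `f'` on intervals avoiding `μ`. -/
private lemma f'_lip (f' f'' : ℝ → ℝ) (μ M₂ : ℝ)
    (hd2 : ∀ x ≠ μ, HasDerivAt f' (f'' x) x)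
    (hM : ∀ x ≠ μ, |f'' x| ≤ M₂)
    {a b : ℝ} (hab : a < b) (hne : ∀ x ∈ Set.Icc a b, x ≠ μ) :
    |f' b - f' a| ≤ M₂ * (b - a) := by
  obtain ⟨c, hc, hceq⟩ := exists_hasDerivAt_eq_slope f' f'' hab
    (fun x hx => (hd2 x (hne x hx)).continuousAt.continuousWithinAt)
    (fun x hx => hd2 x (hne x (Set.Ioo_subset_Icc_self hx)))
  have hba : b - a ≠ 0 := sub_ne_zero.mpr hab.ne'
  have heq : f' b - f' a = f'' c * (b - a) := by
    rw [hceq]; field_simp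
  rw [heq, abs_mul, abs_of_pos (by linarith : (0:ℝ) < b - a)]
  exact mul_le_mul_of_nonneg_right (hM c (hne c (Set.Ioo_subset_Icc_self hc)))
    (by linarith)

private lemma lipL (f f' f'' : ℝ → ℝ) (μ M₂ dL : ℝ)
    (hf : Continuous f)
    (hd1 : ∀ x ≠ μ, HasDerivAt f (f' x) x)
    (hd2 : ∀ x ≠ μ, HasDerivAt f' (f'' x) x)
    (hM : ∀ x ≠ μ, |f'' x| ≤ M₂) (hM₂ : 0 ≤ M₂)
    (hdL : HasDerivWithinAt f dL (Set.Iic μ) μ)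
    {a : ℝ} (ha : a < μ) : |dL - f' a| ≤ M₂ * (μ - a) := by
  refine le_of_forall_pos_le_add fun ε hε => ?_
  have hsl : Filter.Tendsto (slope f μ) (nhdsWithin μ (Set.Iio μ)) (nhds dL) := by
    have h := hasDerivWithinAt_iff_tendsto_slope.mp hdL
    have hset : Set.Iic μ \ {μ} = Set.Iio μ := by
      ext y
      simp only [Set.mem_diff, Set.mem_Iic, Set.mem_singleton_iff, Set.mem_Iio]
      constructor
      · rintro ⟨h1, h2⟩; exact lt_of_le_of_ne h1 h2
      · intro h; exact ⟨h.le, ne_of_lt h⟩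
    rwa [hset] at h
  have h1 : ∀ᶠ x in nhdsWithin μ (Set.Iio μ), |slope f μ x - dL| < ε :=
    (Metric.tendsto_nhds.mp hsl ε hε).mono fun x hx => by
      simpa [Real.dist_eq] using hx
  have h2 : ∀ᶠ x in nhdsWithin μ (Set.Iio μ), x ∈ Set.Ioo a μ :=
    Filter.eventually_of_mem (Ioo_mem_nhdsLT_of_mem ⟨ha, le_rfl⟩) fun _ h => h
  obtain ⟨x, hxe, hxm⟩ := (h1.and h2).exists
  obtain ⟨ξ, hξ, hξeq⟩ := exists_hasDerivAt_eq_slope f f' hxm.2 hf.continuousOn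
    (fun y hy => hd1 y (ne_of_lt hy.2))
  have hslx : f' ξ = slope f μ x := by
    rw [hξeq, slope_def_field, ← neg_sub (f x) (f μ), ← neg_sub x μ, neg_div_neg_eq]
  have haξ : a < ξ := hxm.1.trans hξ.1
  have hb1 : |f' ξ - f' a| ≤ M₂ * (ξ - a) :=
    f'_lip f' f'' μ M₂ hd2 hM haξ
      (fun y hy => ne_of_lt (lt_of_le_of_lt hy.2 hξ.2))
  have hb2 : |dL - f' ξ| < ε := by
    rw [hslx, abs_sub_comm]; exact hxe
  have hb3 : M₂ * (ξ - a) ≤ M₂ * (μ - a) :=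
    mul_le_mul_of_nonneg_left (by linarith [hξ.2] : ξ - a ≤ μ - a) hM₂
  calc |dL - f' a| ≤ |dL - f' ξ| + |f' ξ - f' a| := abs_sub_le _ _ _
    _ ≤ M₂ * (μ - a) + ε := by linarith

private lemma lipR (f f' f'' : ℝ → ℝ) (μ M₂ dR : ℝ)
    (hf : Continuous f)
    (hd1 : ∀ x ≠ μ, HasDerivAt f (f' x) x)
    (hd2 : ∀ x ≠ μ, HasDerivAt f' (f'' x) x)
    (hM : ∀ x ≠ μ, |f'' x| ≤ M₂) (hM₂ : 0 ≤ M₂)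
    (hdR : HasDerivWithinAt f dR (Set.Ici μ) μ)
    {b : ℝ} (hb : μ < b) : |f' b - dR| ≤ M₂ * (b - μ) := by
  refine le_of_forall_pos_le_add fun ε hε => ?_
  have hsl : Filter.Tendsto (slope f μ) (nhdsWithin μ (Set.Ioi μ)) (nhds dR) := by
    have h := hasDerivWithinAt_iff_tendsto_slope.mp hdR
    have hset : Set.Ici μ \ {μ} = Set.Ioi μ := by
      ext y
      simp only [Set.mem_diff, Set.mem_Ici, Set.mem_singleton_iff, Set.mem_Ioi]
      constructor
      · rintro ⟨h1, h2⟩; exact lt_of_le_of_ne h1 (Ne.symm h2)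
      · intro h; exact ⟨h.le, ne_of_gt h⟩
    rwa [hset] at h
  have h1 : ∀ᶠ x in nhdsWithin μ (Set.Ioi μ), |slope f μ x - dR| < ε :=
    (Metric.tendsto_nhds.mp hsl ε hε).mono fun x hx => by
      simpa [Real.dist_eq] using hx
  have h2 : ∀ᶠ x in nhdsWithin μ (Set.Ioi μ), x ∈ Set.Ioo μ b :=
    Filter.eventually_of_mem (Ioo_mem_nhdsGT_of_mem ⟨le_rfl, hb⟩) fun _ h => h
  obtain ⟨x, hxe, hxm⟩ := (h1.and h2).exists
  obtain ⟨ξ, hξ, hξeq⟩ := exists_hasDerivAt_eq_slope f f' hxm.1 hf.continuousOn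
    (fun y hy => hd1 y (ne_of_gt hy.1))
  have hslx : f' ξ = slope f μ x := by
    rw [hξeq, slope_def_field]
  have hξb : ξ < b := hξ.2.trans hxm.2
  have hb1 : |f' b - f' ξ| ≤ M₂ * (b - ξ) :=
    f'_lip f' f'' μ M₂ hd2 hM hξb
      (fun y hy => ne_of_gt (lt_of_lt_of_le hξ.1 hy.1))
  have hb2 : |f' ξ - dR| < ε := by rw [hslx]; exact hxe
  have hb3 : M₂ * (b - ξ) ≤ M₂ * (b - μ) :=
    mul_le_mul_of_nonneg_left (by linarith [hξ.1] : b - ξ ≤ b - μ) hM₂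
  calc |f' b - dR| ≤ |f' b - f' ξ| + |f' ξ - dR| := abs_sub_le _ _ _
    _ ≤ M₂ * (b - μ) + ε := by linarith


private noncomputable def gfun (f : ℝ → ℝ) (J μ : ℝ) : ℝ → ℝ :=
  fun x => f x - J * max (x - μ) 0

private noncomputable def gder (f' : ℝ → ℝ) (J μ dL : ℝ) : ℝ → ℝ :=
  fun x => if x < μ then f' x else if μ < x then f' x - J else dL

private lemma gfun_le (f : ℝ → ℝ) (J μ : ℝ) {y : ℝ} (hy : y ≤ μ) :
    gfun f J μ y = f y := by
  simp [gfun, max_eq_right (sub_nonpos.mpr hy)]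

private lemma gfun_ge (f : ℝ → ℝ) (J μ : ℝ) {y : ℝ} (hy : μ ≤ y) :
    gfun f J μ y = f y - J * (y - μ) := by
  simp [gfun, max_eq_left (sub_nonneg.mpr hy)]

private lemma gfun_hasDeriv (f f' : ℝ → ℝ) (μ dL dR : ℝ)
    (hd1 : ∀ x ≠ μ, HasDerivAt f (f' x) x)
    (hdL : HasDerivWithinAt f dL (Set.Iic μ) μ)
    (hdR : HasDerivWithinAt f dR (Set.Ici μ) μ) :
    ∀ x, HasDerivAt (gfun f (dR - dL) μ) (gder f' (dR - dL) μ dL x) x := by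
  intro x
  rcases lt_trichotomy x μ with hx | hx | hx
  · rw [show gder f' (dR - dL) μ dL x = f' x from if_pos hx]
    refine (hd1 x hx.ne).congr_of_eventuallyEq ?_
    filter_upwards [Iio_mem_nhds hx] with y hy
    exact gfun_le f (dR - dL) μ hy.le
  · subst hx
    rw [show gder f' (dR - dL) x dL x = dL from by simp [gder]]
    have left : HasDerivWithinAt (gfun f (dR - dL) x) dL (Set.Iic x) x :=
      hdL.congr (fun y hy => gfun_le f (dR - dL) x hy) (gfun_le f (dR - dL) x le_rfl)
    have h0 : HasDerivAt (fun y : ℝ => (dR - dL) * (y - x)) ((dR - dL) * 1) x :=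
      ((hasDerivAt_id x).sub_const x).const_mul (dR - dL)
    have right : HasDerivWithinAt (gfun f (dR - dL) x) (dR - (dR - dL) * 1) (Set.Ici x) x :=
      (hdR.sub h0.hasDerivWithinAt).congr
        (fun y hy => gfun_ge f (dR - dL) x hy) (gfun_ge f (dR - dL) x le_rfl)
    rw [show dR - (dR - dL) * 1 = dL from by ring] at right
    have hu := left.union right
    rw [Set.Iic_union_Ici] at hu
    exact hasDerivWithinAt_univ.mp hu
  · rw [show gder f' (dR - dL) μ dL x = f' x - (dR - dL) from by
      simp only [gder]; rw [if_neg (by linarith), if_pos hx]]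
    have h0 : HasDerivAt (fun y : ℝ => (dR - dL) * (y - μ)) ((dR - dL) * 1) x :=
      ((hasDerivAt_id x).sub_const μ).const_mul (dR - dL)
    have := (hd1 x hx.ne').sub h0
    rw [show f' x - (dR - dL) * 1 = f' x - (dR - dL) from by ring] at this
    refine this.congr_of_eventuallyEq ?_
    filter_upwards [Ioi_mem_nhds hx] with y hy
    exact gfun_ge f (dR - dL) μ hy.le

private lemma gder_lip (f f' f'' : ℝ → ℝ) (μ M₂ dL dR : ℝ)
    (hf : Continuous f)
    (hd1 : ∀ x ≠ μ, HasDerivAt f (f' x) x)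
    (hd2 : ∀ x ≠ μ, HasDerivAt f' (f'' x) x)
    (hM : ∀ x ≠ μ, |f'' x| ≤ M₂) (hM₂ : 0 ≤ M₂)
    (hdL : HasDerivWithinAt f dL (Set.Iic μ) μ)
    (hdR : HasDerivWithinAt f dR (Set.Ici μ) μ) :
    ∀ a b : ℝ, a ≤ b →
      |gder f' (dR - dL) μ dL b - gder f' (dR - dL) μ dL a| ≤ M₂ * (b - a) := by
  have hgμ : gder f' (dR - dL) μ dL μ = dL := by simp [gder]
  have hglt : ∀ x, x < μ → gder f' (dR - dL) μ dL x = f' x := fun x hx => if_pos hx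
  have hggt : ∀ x, μ < x → gder f' (dR - dL) μ dL x = f' x - (dR - dL) := by
    intro x hx
    simp only [gder]; rw [if_neg (by linarith), if_pos hx]
  have HL : ∀ a b : ℝ, a ≤ b → b ≤ μ →
      |gder f' (dR - dL) μ dL b - gder f' (dR - dL) μ dL a| ≤ M₂ * (b - a) := by
    intro a b hab hbμ
    rcases eq_or_lt_of_le hab with rfl | hab
    · simp [mul_nonneg hM₂]
    rcases eq_or_lt_of_le hbμ with rfl | hbμ
    · rw [hgμ, hglt a hab]
      have := lipL f f' f'' b M₂ dL hf hd1 hd2 hM hM₂ hdL hab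
      linarith
    · rw [hglt a (hab.trans hbμ), hglt b hbμ]
      exact f'_lip f' f'' μ M₂ hd2 hM hab
        (fun y hy => ne_of_lt (lt_of_le_of_lt hy.2 hbμ))
  have HR : ∀ a b : ℝ, a ≤ b → μ ≤ a →
      |gder f' (dR - dL) μ dL b - gder f' (dR - dL) μ dL a| ≤ M₂ * (b - a) := by
    intro a b hab hμa
    rcases eq_or_lt_of_le hab with rfl | hab
    · simp [mul_nonneg hM₂]
    rcases eq_or_lt_of_le hμa with rfl | hμa
    · rw [hgμ, hggt b hab]
      have := lipR f f' f'' μ M₂ dR hf hd1 hd2 hM hM₂ hdR hab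
      have he : f' b - (dR - dL) - dL = f' b - dR := by ring
      rw [he]
      linarith
    · rw [hggt a hμa, hggt b (hμa.trans hab)]
      have he : f' b - (dR - dL) - (f' a - (dR - dL)) = f' b - f' a := by ring
      rw [he]
      exact f'_lip f' f'' μ M₂ hd2 hM hab
        (fun y hy => ne_of_gt (lt_of_lt_of_le hμa hy.1))
  intro a b hab
  rcases le_or_gt b μ with hb | hb
  · exact HL a b hab hb
  rcases le_or_gt a μ with ha | ha
  · have t1 := HL a μ ha le_rfl
    have t2 := HR μ b hb.le le_rfl
    calc |gder f' (dR - dL) μ dL b - gder f' (dR - dL) μ dL a|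
        ≤ |gder f' (dR - dL) μ dL b - gder f' (dR - dL) μ dL μ|
          + |gder f' (dR - dL) μ dL μ - gder f' (dR - dL) μ dL a| := abs_sub_le _ _ _
      _ ≤ M₂ * (b - a) := by linarith
  · exact HR a b hab ha.le

/-- If `x_j ≤ μ ≤ (x_j + x_{j+1})/2` and `h_max < h_c := |[f']|/(4M₂)`, then
`|D_{j−1} f| > |D_i f|` for every `i ≤ j − 2` and every `i ≥ j + 1`. -/
theorem statement11 (X : ℤ → ℝ) (hX : StrictMono X) (hmax : ℝ)
    (hhi : ∀ i : ℤ, X i - X (i - 1) ≤ hmax)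
    (f f' f'' : ℝ → ℝ) (μ : ℝ)
    (hf : Continuous f)
    (hd1 : ∀ x ≠ μ, HasDerivAt f (f' x) x)
    (hd2 : ∀ x ≠ μ, HasDerivAt f' (f'' x) x)
    (hc2 : ContinuousOn f'' {μ}ᶜ)
    (M₂ : ℝ) (hM : ∀ x ≠ μ, |f'' x| ≤ M₂)
    (dL dR : ℝ)
    (hdL : HasDerivWithinAt f dL (Set.Iic μ) μ)
    (hdR : HasDerivWithinAt f dR (Set.Ici μ) μ)
    (hjump : dR - dL ≠ 0)
    (j : ℤ) (hμ1 : X j ≤ μ) (hμ2 : μ ≤ (X j + X (j + 1)) / 2)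
    (hcrit : hmax < |dR - dL| / (4 * M₂)) :
    ∀ i : ℤ, (i ≤ j - 2 ∨ j + 1 ≤ i) → |Dd X f i| < |Dd X f (j - 1)| := by
  intro i hi
  have hgrid : ∀ k : ℤ, X k < X (k + 1) := fun k => hX (by omega)
  have hMnn : 0 ≤ M₂ := le_trans (abs_nonneg _) (hM (μ + 1) (ne_of_gt (lt_add_one μ)))
  have hj0 : X (j - 1) < X j := by
    have := hgrid (j - 1); rwa [show j - 1 + 1 = j from by ring] at this
  have hmaxpos : 0 < hmax :=
    lt_of_lt_of_le (by linarith : (0:ℝ) < X j - X (j - 1)) (hhi j)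
  have hM₂pos : 0 < M₂ := by
    rcases hMnn.eq_or_lt with h | h
    · exfalso; rw [← h] at hcrit; norm_num at hcrit; linarith
    · exact h
  have hj2 : X j < X (j + 1) := hgrid j
  have hμc : μ < X (j + 1) := by linarith
  have hder := gfun_hasDeriv f f' μ dL dR hd1 hdL hdR
  have hlip := gder_lip f f' f'' μ M₂ dL dR hf hd1 hd2 hM hMnn hdL hdR
  have hgb : ∀ k : ℤ, |Dd X (gfun f (dR - dL) μ) k| ≤ M₂ / 2 := by
    intro k
    have h2 : X (k + 1) < X (k + 2) := by
      have := hgrid (k + 1); rwa [show k + 1 + 1 = k + 2 from by ring] at this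
    rw [dd_slope X _ k (hgrid k) h2]
    exact dd_abs_le _ _ M₂ hder hlip (hgrid k) h2
  -- the far stencils: `Dd X f i = Dd X g i`, hence bounded by `M₂ / 2`
  have hfar : |Dd X f i| ≤ M₂ / 2 := by
    have h2 : X (i + 1) < X (i + 2) := by
      have := hgrid (i + 1); rwa [show i + 1 + 1 = i + 2 from by ring] at this
    rcases hi with hi | hi
    · have e0 : X i ≤ μ := le_trans (hX.monotone (by omega : i ≤ j)) hμ1
      have e1 : X (i + 1) ≤ μ := le_trans (hX.monotone (by omega : i + 1 ≤ j)) hμ1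
      have e2 : X (i + 2) ≤ μ := le_trans (hX.monotone (by omega : i + 2 ≤ j)) hμ1
      have heq : Dd X (gfun f (dR - dL) μ) i = Dd X f i := by
        unfold Dd
        rw [gfun_le f (dR - dL) μ e0, gfun_le f (dR - dL) μ e1,
          gfun_le f (dR - dL) μ e2]
      rw [← heq]; exact hgb i
    · have e0 : μ ≤ X i := le_trans hμc.le (hX.monotone (by omega : j + 1 ≤ i))
      have e1 : μ ≤ X (i + 1) := le_trans hμc.le (hX.monotone (by omega : j + 1 ≤ i + 1))
      have e2 : μ ≤ X (i + 2) := le_trans hμc.le (hX.monotone (by omega : j + 1 ≤ i + 2))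
      have d1 : X (i + 1) - X i ≠ 0 := sub_ne_zero.mpr (hgrid i).ne'
      have d2 : X (i + 2) - X (i + 1) ≠ 0 := sub_ne_zero.mpr h2.ne'
      have d3 : X (i + 2) - X i ≠ 0 := sub_ne_zero.mpr ((hgrid i).trans h2).ne'
      have heq : Dd X (gfun f (dR - dL) μ) i = Dd X f i := by
        unfold Dd
        rw [gfun_ge f (dR - dL) μ e0, gfun_ge f (dR - dL) μ e1,
          gfun_ge f (dR - dL) μ e2]
        field_simp
        ring
      rw [← heq]; exact hgb i
  -- the decomposition at the singular stencil
  set T : ℝ := (X (j + 1) - μ) / ((X (j + 1) - X j) * (X (j + 1) - X (j - 1))) with hT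
  have key : Dd X f (j - 1) = Dd X (gfun f (dR - dL) μ) (j - 1) + (dR - dL) * T := by
    unfold Dd
    rw [show j - 1 + 1 = j from by ring, show j - 1 + 2 = j + 1 from by ring]
    rw [gfun_le f (dR - dL) μ (le_trans hj0.le hμ1), gfun_le f (dR - dL) μ hμ1,
      gfun_ge f (dR - dL) μ hμc.le, hT]
    ring
  have hcb : (0:ℝ) < X (j + 1) - X j := by linarith
  have hca : (0:ℝ) < X (j + 1) - X (j - 1) := by linarith
  have hca2 : X (j + 1) - X (j - 1) ≤ 2 * hmax := by
    have t1 := hhi j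
    have t2 := hhi (j + 1)
    rw [show j + 1 - 1 = j from by ring] at t2
    linarith
  have hT0 : 0 ≤ T := by
    rw [hT]; exact div_nonneg (by linarith) (mul_nonneg hcb.le hca.le)
  have hTge : 1 / (2 * (X (j + 1) - X (j - 1))) ≤ T := by
    rw [hT, div_le_div_iff₀ (by linarith) (mul_pos hcb hca)]
    nlinarith [mul_le_mul_of_nonneg_right
      (show X (j + 1) - X j ≤ 2 * (X (j + 1) - μ) by linarith) hca.le]
  have hTlb : |dR - dL| / (4 * hmax) ≤ |dR - dL| * T := by
    have hstep1 : |dR - dL| / (4 * hmax)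
        ≤ |dR - dL| / (2 * (X (j + 1) - X (j - 1))) := by
      rw [div_le_div_iff₀ (by linarith) (by linarith)]
      exact mul_le_mul_of_nonneg_left (by linarith) (abs_nonneg _)
    calc |dR - dL| / (4 * hmax) ≤ |dR - dL| / (2 * (X (j + 1) - X (j - 1))) := hstep1
      _ = |dR - dL| * (1 / (2 * (X (j + 1) - X (j - 1)))) := by rw [mul_one_div]
      _ ≤ |dR - dL| * T := mul_le_mul_of_nonneg_left hTge (abs_nonneg _)
  have hMlt : M₂ < |dR - dL| / (4 * hmax) := by
    rw [lt_div_iff₀ (by linarith : (0:ℝ) < 4 * hmax)]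
    rw [lt_div_iff₀ (by linarith : (0:ℝ) < 4 * M₂)] at hcrit
    calc M₂ * (4 * hmax) = hmax * (4 * M₂) := by ring
      _ < |dR - dL| := hcrit
  have hJT : |dR - dL| * T
      ≤ |Dd X f (j - 1)| + |Dd X (gfun f (dR - dL) μ) (j - 1)| := by
    have e : (dR - dL) * T = Dd X f (j - 1) - Dd X (gfun f (dR - dL) μ) (j - 1) := by
      rw [key]; ring
    calc |dR - dL| * T = |(dR - dL) * T| := by rw [abs_mul, abs_of_nonneg hT0]
      _ = |Dd X f (j - 1) - Dd X (gfun f (dR - dL) μ) (j - 1)| := by rw [e]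
      _ ≤ |Dd X f (j - 1)| + |Dd X (gfun f (dR - dL) μ) (j - 1)| := by
          rw [sub_eq_add_neg]
          refine (abs_add_le _ _).trans ?_
          rw [abs_neg]
  have hg1 := hgb (j - 1)
  linarith
end

section
/- Let m ≥ 2 and σ ≥ 1. There exists a constant D > 0 depending only on m and σ such that for every σ quasi-uniform grid X, every g: ℝ → ℝ of class C² with sup_ℝ |g''| < ∞, every index i, and every t ∈ ℝ whose distance to the interval [x_{i+1}, x_{i+m}] is at most 2h (h := h_max), the Lagrange polynomial p of degree ≤ m−1 interpolating g at the m nodes x_{i+1},…,x_{i+m} satisfies |g'(t) − p'(t)| ≤ D h sup_ℝ |g''|. -/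
open Polynomial Finset

theorem myDerivProd {ι : Type*} [DecidableEq ι] (s : Finset ι) (f : ι → Polynomial ℝ) :
    Polynomial.derivative (∏ j ∈ s, f j) =
      ∑ j ∈ s, (∏ k ∈ s.erase j, f k) * Polynomial.derivative (f j) := by
  induction s using Finset.induction with
  | empty => simp
  | @insert a s ha ih =>
    rw [Finset.prod_insert ha, Polynomial.derivative_mul, ih, Finset.sum_insert ha,
      Finset.erase_insert ha, Finset.mul_sum]
    congr 1
    · ring
    · apply Finset.sum_congr rfl
      intro j hj
      have haj : j ≠ a := fun h => ha (h ▸ hj)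
      rw [Finset.erase_insert_of_ne haj.symm,
        Finset.prod_insert (fun h => ha (Finset.erase_subset _ _ h))]
      ring

theorem myMVT {f f' : ℝ → ℝ} (hf : ∀ x, HasDerivAt f (f' x) x) {C : ℝ}
    (hC : ∀ x, |f' x| ≤ C) (a b : ℝ) : |f b - f a| ≤ C * |b - a| := by
  have := (convex_univ : Convex ℝ (Set.univ : Set ℝ)).norm_image_sub_le_of_norm_hasDerivWithin_le
    (fun x _ => (hf x).hasDerivWithinAt) (fun x _ => hC x) (Set.mem_univ a) (Set.mem_univ b)
  simpa [Real.norm_eq_abs] using this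

theorem myTaylor {g g' g'' : ℝ → ℝ} (hg : ∀ x, HasDerivAt g (g' x) x)
    (hg' : ∀ x, HasDerivAt g' (g'' x) x) {M : ℝ} (hM : ∀ x, |g'' x| ≤ M)
    (t y : ℝ) : |g y - g t - g' t * (y - t)| ≤ M * (y - t) ^ 2 := by
  have hM0 : 0 ≤ M := le_trans (abs_nonneg _) (hM 0)
  have hlip : ∀ a b : ℝ, |g' b - g' a| ≤ M * |b - a| := fun a b => myMVT hg' hM a b
  set φ : ℝ → ℝ := fun s => g s - g t - g' t * (s - t) with hφdef
  have hφ : ∀ s, HasDerivAt φ (g' s - g' t) s := by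
    intro s
    have h1 : HasDerivAt (fun u : ℝ => g' t * (u - t)) (g' t) s := by
      simpa using (((hasDerivAt_id s).sub_const t).const_mul (g' t))
    exact (((hg s).sub_const (g t)).sub h1)
  have key := (convex_Icc (min t y) (max t y)).norm_image_sub_le_of_norm_hasDerivWithin_le
    (f' := fun s => g' s - g' t) (C := M * |y - t|)
    (fun x _ => (hφ x).hasDerivWithinAt)
    (fun x hx => by
      have h1 : |g' x - g' t| ≤ M * |x - t| := hlip t x
      have h2 : |x - t| ≤ |y - t| := by
        rcases hx with ⟨hx1, hx2⟩
        have hmm : max t y - min t y = |y - t| := by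
          exact max_sub_min_eq_abs t y
        have ht1 := min_le_left t y
        have ht2 := le_max_left t y
        rw [abs_le]
        constructor <;> linarith
      calc ‖g' x - g' t‖ = |g' x - g' t| := rfl
        _ ≤ M * |x - t| := h1
        _ ≤ M * |y - t| := by nlinarith)
    ⟨min_le_left t y, le_max_left t y⟩ ⟨min_le_right t y, le_max_right t y⟩
  have hφt : φ t = 0 := by simp [hφdef]
  have : ‖φ y - φ t‖ ≤ M * |y - t| * ‖y - t‖ := key
  rw [hφt, sub_zero] at this
  calc |g y - g t - g' t * (y - t)| = ‖φ y‖ := rfl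
    _ ≤ M * |y - t| * ‖y - t‖ := this
    _ = M * (y - t) ^ 2 := by
        rw [Real.norm_eq_abs, mul_assoc, abs_mul_abs_self]; ring

theorem gridUpper (X : ℤ → ℝ) (hmax : ℝ) (h : ∀ i : ℤ, X i - X (i - 1) ≤ hmax)
    (a : ℤ) (n : ℕ) : X (a + n) - X a ≤ n * hmax := by
  induction n with
  | zero => simp
  | succ n ih =>
    have h1 := h (a + n + 1)
    have h2 : a + ((n + 1 : ℕ) : ℤ) = (a + n) + 1 := by push_cast; ring
    have h3 : a + (n : ℤ) + 1 - 1 = a + n := by ring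
    rw [h2]
    rw [h3] at h1
    push_cast
    linarith

theorem gridLower (X : ℤ → ℝ) (hmin : ℝ) (h : ∀ i : ℤ, hmin ≤ X i - X (i - 1))
    (a : ℤ) (n : ℕ) : (n : ℝ) * hmin ≤ X (a + n) - X a := by
  induction n with
  | zero => simp
  | succ n ih =>
    have h1 := h (a + n + 1)
    have h2 : a + ((n + 1 : ℕ) : ℤ) = (a + n) + 1 := by push_cast; ring
    have h3 : a + (n : ℤ) + 1 - 1 = a + n := by ring
    rw [h2]
    rw [h3] at h1
    push_cast
    linarith

/-- Derivative error of Lagrange interpolation: there is a constant `D > 0`, depending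
only on `m` and `σ`, such that for every `σ` quasi-uniform grid, every `g ∈ C²(ℝ)` with
bounded second derivative, and every `t` at distance at most `2h` from
`[x_{i+1}, x_{i+m}]`, the degree `≤ m − 1` polynomial interpolating `g` at
`x_{i+1}, …, x_{i+m}` satisfies `|g'(t) − p'(t)| ≤ D h sup_ℝ |g''|`. -/
theorem statement15 (m : ℕ) (hm : 2 ≤ m) (σ : ℝ) :
    ∃ D : ℝ, 0 < D ∧
    ∀ (X : ℤ → ℝ), StrictMono X →
    ∀ hmin hmax : ℝ, 0 < hmin →
      (∀ i : ℤ, hmin ≤ X i - X (i - 1)) →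
      (∀ i : ℤ, X i - X (i - 1) ≤ hmax) →
      hmax / hmin ≤ σ →
    ∀ g g' g'' : ℝ → ℝ,
      (∀ x : ℝ, HasDerivAt g (g' x) x) →
      (∀ x : ℝ, HasDerivAt g' (g'' x) x) →
      Continuous g'' →
    ∀ M : ℝ, (∀ x : ℝ, |g'' x| ≤ M) →
    ∀ (i : ℤ) (t : ℝ),
      X (i + 1) - 2 * hmax ≤ t → t ≤ X (i + (m : ℤ)) + 2 * hmax →
    ∀ p : Polynomial ℝ, p.degree < m →
      (∀ n : ℕ, n < m → p.eval (X (i + 1 + (n : ℤ))) = g (X (i + 1 + (n : ℤ)))) →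
      |g' t - p.derivative.eval t| ≤ D * hmax * M := by
  classical
  set σ' : ℝ := max σ 1 with hσ'def
  have hσ'1 : 1 ≤ σ' := le_max_right _ _
  have hσ'0 : 0 < σ' := lt_of_lt_of_le one_pos hσ'1
  have hm0 : (0 : ℝ) < m := by exact_mod_cast Nat.lt_of_lt_of_le two_pos hm
  set K : ℝ := ((m : ℝ) + 1) * σ' with hKdef
  have hK1 : 1 ≤ K := by nlinarith
  have hK0 : 0 < K := lt_of_lt_of_le one_pos hK1
  refine ⟨(m : ℝ) ^ 2 * ((m : ℝ) + 1) ^ 2 * σ' * K ^ m, by positivity, ?_⟩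
  intro X hX hmin hmax hmin0 hgapmin hgapmax hquasi g g' g'' hg hg' _hg'' M hM i t ht1 ht2
    p hpdeg hpinterp
  have hM0 : 0 ≤ M := le_trans (abs_nonneg _) (hM 0)
  have hminmax : hmin ≤ hmax := le_trans (hgapmin 0) (hgapmax 0)
  have hmax0 : 0 < hmax := lt_of_lt_of_le hmin0 hminmax
  have hσσ' : hmax ≤ σ' * hmin := by
    have h1 : hmax / hmin ≤ σ' := le_trans hquasi (le_max_left _ _)
    rw [div_le_iff₀ hmin0] at h1; linarith
  set v : ℕ → ℝ := fun n => X (i + 1 + n) with hvdef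
  set s : Finset ℕ := Finset.range m with hsdef
  have hcard : s.card = m := Finset.card_range m
  -- separation of nodes
  have hsep : ∀ a b : ℕ, a ≠ b → hmin ≤ |v a - v b| := by
    have key : ∀ a b : ℕ, a < b → hmin ≤ v b - v a := by
      intro a b hab
      have h1 := gridLower X hmin hgapmin (i + 1 + a) (b - a)
      have h2 : (i + 1 + a) + ((b - a : ℕ) : ℤ) = i + 1 + b := by
        have := Nat.cast_sub hab.le (R := ℤ); omega
      rw [h2] at h1
      have h3 : (1 : ℝ) ≤ ((b - a : ℕ) : ℝ) := by
        have : 1 ≤ b - a := by omega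
        exact_mod_cast this
      have := h1
      nlinarith
    intro a b hab
    rcases lt_or_gt_of_ne hab with h | h
    · rw [abs_sub_comm, abs_of_nonneg (by linarith [key a b h])]; exact key a b h
    · rw [abs_of_nonneg (by linarith [key b a h])]; exact key b a h
  -- closeness of t to nodes
  have hnear : ∀ n : ℕ, n < m → |t - v n| ≤ ((m : ℝ) + 1) * hmax := by
    intro n hn
    have h1 : X (i + 1) ≤ v n := hX.monotone (by omega)
    have h2 : v n ≤ X (i + (m : ℤ)) := hX.monotone (by omega)
    have h3 := gridUpper X hmax hgapmax (i + 1) (m - 1)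
    have h4 : (i + 1) + ((m - 1 : ℕ) : ℤ) = i + (m : ℤ) := by
      have := Nat.cast_sub (show 1 ≤ m by omega) (R := ℤ); omega
    rw [h4] at h3
    have h5 : ((m - 1 : ℕ) : ℝ) = (m : ℝ) - 1 := by
      rw [Nat.cast_sub (show 1 ≤ m by omega)]; norm_num
    rw [h5] at h3
    rw [abs_le]; constructor <;> nlinarith
  -- injectivity
  have hvinj : Set.InjOn v s := by
    intro a _ b _ hab
    by_contra hne
    have := hsep a b hne
    rw [hab, sub_self, abs_zero] at this
    linarith
  -- p is the interpolant
  have hp : p = Lagrange.interpolate s v (fun n => g (v n)) := by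
    exact Lagrange.eq_interpolate_of_eval_eq _ hvinj (by rw [hcard]; exact hpdeg)
      (fun n hn => hpinterp n (Finset.mem_range.mp hn))
  set q : Polynomial ℝ := Polynomial.C (g' t) * Polynomial.X + Polynomial.C (g t - g' t * t)
    with hqdef
  have hqdeg : q.degree < (s.card : WithBot ℕ) := by
    refine lt_of_le_of_lt (Polynomial.degree_linear_le) ?_
    rw [hcard]
    exact_mod_cast (show 1 < m by omega)
  have hq : q = Lagrange.interpolate s v (fun n => g t + g' t * (v n - t)) := by
    refine Lagrange.eq_interpolate_of_eval_eq _ hvinj hqdeg (fun n _ => ?_)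
    simp only [hqdef, Polynomial.eval_add, Polynomial.eval_mul, Polynomial.eval_C,
      Polynomial.eval_X]
    ring
  set e : ℕ → ℝ := fun n => g (v n) - g t - g' t * (v n - t) with hedef
  have hpq : p = q + Lagrange.interpolate s v e := by
    rw [hp, hq]
    rw [← map_add]
    congr 1
    funext n
    simp [hedef]
  have hqder : q.derivative.eval t = g' t := by
    simp [hqdef]
  have hmain : g' t - p.derivative.eval t
      = -((Lagrange.interpolate s v e).derivative.eval t) := by
    rw [hpq, Polynomial.derivative_add, Polynomial.eval_add, hqder]
    ring
  rw [hmain, abs_neg]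
  have hexp : (Lagrange.interpolate s v e).derivative.eval t
      = ∑ n ∈ s, e n * (Lagrange.basis s v n).derivative.eval t := by
    rw [Lagrange.interpolate_apply, map_sum, Polynomial.eval_finset_sum]
    apply Finset.sum_congr rfl
    intro n _
    rw [Polynomial.derivative_C_mul, Polynomial.eval_mul, Polynomial.eval_C]
  rw [hexp]
  -- bound on e
  have hebound : ∀ n ∈ s, |e n| ≤ M * (((m : ℝ) + 1) * hmax) ^ 2 := by
    intro n hn
    have h1 : |e n| ≤ M * (v n - t) ^ 2 := myTaylor hg hg' hM t (v n)
    have h2 := hnear n (Finset.mem_range.mp hn)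
    have h3 : (v n - t) ^ 2 ≤ (((m : ℝ) + 1) * hmax) ^ 2 := by
      rw [← sq_abs, abs_sub_comm]
      exact pow_le_pow_left₀ (abs_nonneg _) h2 2
    nlinarith
  -- bound on inverses
  have hinvb : ∀ a b : ℕ, a ≠ b → |v a - v b|⁻¹ ≤ σ' / hmax := by
    intro a b hab
    have h1 := hsep a b hab
    have h2 : |v a - v b|⁻¹ ≤ hmin⁻¹ := by
      apply inv_anti₀ hmin0 h1
    refine le_trans h2 ?_
    rw [← one_div]
    exact (div_le_div_iff₀ hmin0 hmax0).mpr (by linarith)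
  -- bound on derivative of basis polynomials
  have hBbound : ∀ n ∈ s, |(Lagrange.basis s v n).derivative.eval t|
      ≤ (m : ℝ) * (K ^ m * (σ' / hmax)) := by
    intro n hn
    have hnm := Finset.mem_range.mp hn
    rw [Lagrange.basis, myDerivProd]
    have hder : ∀ l ∈ s.erase n,
        ((∏ k ∈ (s.erase n).erase l, Lagrange.basisDivisor (v n) (v k)) *
          Polynomial.derivative (Lagrange.basisDivisor (v n) (v l))).eval t
        = (∏ k ∈ (s.erase n).erase l, ((v n - v k)⁻¹ * (t - v k))) * (v n - v l)⁻¹ := by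
      intro l _
      rw [Polynomial.eval_mul, Polynomial.eval_prod]
      congr 1
      · apply Finset.prod_congr rfl
        intro k _
        simp [Lagrange.basisDivisor]
      · simp [Lagrange.basisDivisor]
    rw [Polynomial.eval_finset_sum, Finset.sum_congr rfl hder]
    refine le_trans (Finset.abs_sum_le_sum_abs _ _) ?_
    have hterm : ∀ l ∈ s.erase n,
        |(∏ k ∈ (s.erase n).erase l, ((v n - v k)⁻¹ * (t - v k))) * (v n - v l)⁻¹|
          ≤ K ^ m * (σ' / hmax) := by
      intro l hl
      rw [abs_mul]
      have hprod : |∏ k ∈ (s.erase n).erase l, ((v n - v k)⁻¹ * (t - v k))| ≤ K ^ m := by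
        rw [Finset.abs_prod]
        have hKeq : σ' / hmax * (((m : ℝ) + 1) * hmax) = K := by
          field_simp
          rw [hKdef]; ring
        have hstep : ∀ k ∈ (s.erase n).erase l, |(v n - v k)⁻¹ * (t - v k)| ≤ K := by
          intro k hk
          have hk1 : k ∈ s.erase n := Finset.mem_of_mem_erase hk
          have hkn : k ≠ n := Finset.ne_of_mem_erase hk1
          have hks : k ∈ s := Finset.mem_of_mem_erase hk1
          rw [abs_mul, abs_inv]
          calc |v n - v k|⁻¹ * |t - v k| ≤ (σ' / hmax) * (((m : ℝ) + 1) * hmax) := by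
                apply mul_le_mul (hinvb n k hkn.symm) (hnear k (Finset.mem_range.mp hks))
                  (abs_nonneg _) (div_nonneg hσ'0.le hmax0.le)
            _ = K := hKeq
        calc ∏ k ∈ (s.erase n).erase l, |(v n - v k)⁻¹ * (t - v k)|
            ≤ ∏ _k ∈ (s.erase n).erase l, K :=
              Finset.prod_le_prod (fun k _ => abs_nonneg _) hstep
          _ = K ^ ((s.erase n).erase l).card := Finset.prod_const K
          _ ≤ K ^ m := by
              apply pow_le_pow_right₀ hK1
              calc ((s.erase n).erase l).card ≤ s.card := by
                    apply Finset.card_le_card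
                    exact (Finset.erase_subset _ _).trans (Finset.erase_subset _ _)
                _ = m := hcard
      have hinv2 : |(v n - v l)⁻¹| ≤ σ' / hmax := by
        rw [abs_inv]
        exact hinvb n l (Finset.ne_of_mem_erase hl).symm
      exact mul_le_mul hprod hinv2 (abs_nonneg _) (pow_nonneg hK0.le m)
    refine le_trans (Finset.sum_le_sum hterm) ?_
    rw [Finset.sum_const, nsmul_eq_mul]
    have hc : ((s.erase n).card : ℝ) ≤ (m : ℝ) := by
      have : (s.erase n).card ≤ m := by
        rw [← hcard]; exact Finset.card_le_card (Finset.erase_subset _ _)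
      exact_mod_cast this
    exact mul_le_mul_of_nonneg_right hc
      (mul_nonneg (pow_nonneg hK0.le m) (div_nonneg hσ'0.le hmax0.le))
  -- final assembly
  refine le_trans (Finset.abs_sum_le_sum_abs _ _) ?_
  have hterm2 : ∀ n ∈ s, |e n * (Lagrange.basis s v n).derivative.eval t|
      ≤ (M * (((m : ℝ) + 1) * hmax) ^ 2) * ((m : ℝ) * (K ^ m * (σ' / hmax))) := by
    intro n hn
    rw [abs_mul]
    exact mul_le_mul (hebound n hn) (hBbound n hn) (abs_nonneg _)
      (mul_nonneg hM0 (by positivity))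
  refine le_trans (Finset.sum_le_sum hterm2) ?_
  rw [Finset.sum_const, nsmul_eq_mul, hcard]
  have hfin : (m : ℝ) * ((M * (((m : ℝ) + 1) * hmax) ^ 2) * ((m : ℝ) * (K ^ m * (σ' / hmax))))
      = (m : ℝ) ^ 2 * ((m : ℝ) + 1) ^ 2 * σ' * K ^ m * hmax * M := by
    field_simp
  rw [hfin]
end

section
/- Let m ≥ 2, let X be a σ quasi-uniform grid, and let f: ℝ → ℝ be continuous on ℝ, C² on ℝ∖{μ} with M₂ := sup_{ℝ∖{μ}} |f''| < ∞ and jump [f'] := f'(μ⁺) − f'(μ⁻) ≠ 0. Let a ≤ μ ≤ b be grid points with b − a ≤ 2h (h := h_max), let p⁻ be the Lagrange polynomial of degree ≤ m−1 interpolating f at the m consecutive grid nodes ending at a, and let p⁺ be the one interpolating f at the m consecutive grid nodes starting at b. Then there exists a constant D > 0, depending only on m and σ, such that |(p⁺)'(t) − (p⁻)'(t)| ≥ |[f']| − 2(D+2) h M₂ for all t ∈ [a,b]; consequently, if h < (2/(D+2))·h_c with h_c := |[f']|/(4M₂), then p⁺ − p⁻ is strictly monotone on [a,b] and has at most one zero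 there. -/
open Polynomial Finset

lemma grid_upper (X : ℤ → ℝ) (hmax : ℝ) (hhi : ∀ i : ℤ, X i - X (i-1) ≤ hmax) :
    ∀ (n : ℕ) (i : ℤ), X i - X (i - (n:ℤ)) ≤ n * hmax := by
  intro n
  induction n with
  | zero => intro i; simp
  | succ k ih =>
    intro i
    have h1 := hhi i
    have h2 := ih (i - 1)
    have e : i - ((k:ℤ)+1) = (i-1) - (k:ℤ) := by ring
    push_cast
    rw [e]
    push_cast at h2
    linarith

lemma grid_lower (X : ℤ → ℝ) (hmin : ℝ) (hlo : ∀ i : ℤ, hmin ≤ X i - X (i-1)) :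
    ∀ (n : ℕ) (i : ℤ), (n : ℝ) * hmin ≤ X i - X (i - (n:ℤ)) := by
  intro n
  induction n with
  | zero => intro i; simp
  | succ k ih =>
    intro i
    have h1 := hlo i
    have h2 := ih (i - 1)
    have e : i - ((k:ℤ)+1) = (i-1) - (k:ℤ) := by ring
    push_cast
    rw [e]
    push_cast at h2
    linarith

lemma taylor_left (f f' f'' : ℝ → ℝ) (μ : ℝ) (hf : Continuous f)
    (hdf : ∀ x ≠ μ, HasDerivAt f (f' x) x)
    (hdf' : ∀ x ≠ μ, HasDerivAt f' (f'' x) x)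
    (M₂ : ℝ) (hM₂0 : 0 ≤ M₂) (hM₂ : ∀ x ≠ μ, |f'' x| ≤ M₂)
    (dL : ℝ) (hdL : HasDerivWithinAt f dL (Set.Iic μ) μ) :
    ∀ x ≤ μ, |f x - f μ - dL * (x - μ)| ≤ M₂ * (μ - x)^2 := by
  intro x hx
  rcases eq_or_lt_of_le hx with rfl | hlt
  · simp
  have hconv : Convex ℝ (Set.Ioo x μ) := convex_Ioo x μ
  have hlip : ∀ u ∈ Set.Ioo x μ, ∀ w ∈ Set.Ioo x μ, |f' u - f' w| ≤ M₂ * (μ - x) := by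
    intro u hu w hw
    have hb := hconv.norm_image_sub_le_of_norm_hasDerivWithin_le
      (f := f') (f' := f'') (C := M₂)
      (fun y hy => (hdf' y (ne_of_lt hy.2)).hasDerivWithinAt)
      (fun y hy => by rw [Real.norm_eq_abs]; exact hM₂ y (ne_of_lt hy.2)) hw hu
    rw [Real.norm_eq_abs, Real.norm_eq_abs] at hb
    have h2 : |u - w| ≤ μ - x := by
      rw [abs_le]; constructor <;> nlinarith [hu.1, hu.2, hw.1, hw.2]
    calc |f' u - f' w| ≤ M₂ * |u - w| := hb
      _ ≤ M₂ * (μ - x) := mul_le_mul_of_nonneg_left h2 hM₂0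
  have hmvt : ∀ x' ∈ Set.Ico x μ, ∃ c ∈ Set.Ioo x' μ, f' c = (f μ - f x') / (μ - x') := by
    intro x' hx'
    exact exists_hasDerivAt_eq_slope f f' hx'.2 hf.continuousOn
      (fun y hy => hdf y (ne_of_lt hy.2))
  obtain ⟨c, hc, hfc⟩ := hmvt x ⟨le_refl x, hlt⟩
  have hslope : Filter.Tendsto (slope f μ) (nhdsWithin μ (Set.Iio μ)) (nhds dL) := by
    have h := hasDerivWithinAt_iff_tendsto_slope.mp hdL
    rwa [Set.Iic_diff_right] at h
  have hev : ∀ᶠ x' in nhdsWithin μ (Set.Iio μ), |slope f μ x' - f' c| ≤ M₂ * (μ - x) := by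
    filter_upwards [Ioo_mem_nhdsLT_of_mem (Set.mem_Ioc.mpr ⟨hlt, le_refl μ⟩)] with x' hx'
    obtain ⟨c', hc', hfc'⟩ := hmvt x' ⟨le_of_lt hx'.1, hx'.2⟩
    have hs : slope f μ x' = f' c' := by
      rw [slope_def_field, hfc']
      rw [div_eq_div_iff (by linarith [hx'.2] : x' - μ ≠ 0) (by linarith [hx'.2] : μ - x' ≠ 0)]
      ring
    rw [hs]
    exact hlip c' ⟨lt_trans hx'.1 hc'.1, hc'.2⟩ c hc
  have hlim : Filter.Tendsto (fun x' => |slope f μ x' - f' c|) (nhdsWithin μ (Set.Iio μ))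
      (nhds (|dL - f' c|)) := ((hslope.sub tendsto_const_nhds).abs)
  have hcd : |dL - f' c| ≤ M₂ * (μ - x) := le_of_tendsto hlim hev
  have hpos : 0 < μ - x := sub_pos.mpr hlt
  have h5 : |(f μ - f x)/(μ - x) - dL| ≤ M₂ * (μ - x) := by
    rw [← hfc, abs_sub_comm]; exact hcd
  have key : ((f μ - f x)/(μ-x) - dL) * (μ - x) = -(f x - f μ - dL*(x-μ)) := by
    field_simp
    ring
  calc |f x - f μ - dL*(x-μ)| = |((f μ - f x)/(μ-x) - dL) * (μ - x)| := by rw [key, abs_neg]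
    _ = |(f μ - f x)/(μ-x) - dL| * |μ - x| := abs_mul _ _
    _ = |(f μ - f x)/(μ-x) - dL| * (μ - x) := by rw [abs_of_pos hpos]
    _ ≤ (M₂*(μ-x))*(μ-x) := mul_le_mul_of_nonneg_right h5 hpos.le
    _ = M₂*(μ-x)^2 := by ring

lemma taylor_right (f f' f'' : ℝ → ℝ) (μ : ℝ) (hf : Continuous f)
    (hdf : ∀ x ≠ μ, HasDerivAt f (f' x) x)
    (hdf' : ∀ x ≠ μ, HasDerivAt f' (f'' x) x)
    (M₂ : ℝ) (hM₂0 : 0 ≤ M₂) (hM₂ : ∀ x ≠ μ, |f'' x| ≤ M₂)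
    (dR : ℝ) (hdR : HasDerivWithinAt f dR (Set.Ici μ) μ) :
    ∀ x, μ ≤ x → |f x - f μ - dR * (x - μ)| ≤ M₂ * (x - μ)^2 := by
  intro x hx
  rcases eq_or_lt_of_le hx with rfl | hlt
  · simp
  have hconv : Convex ℝ (Set.Ioo μ x) := convex_Ioo μ x
  have hlip : ∀ u ∈ Set.Ioo μ x, ∀ w ∈ Set.Ioo μ x, |f' u - f' w| ≤ M₂ * (x - μ) := by
    intro u hu w hw
    have hb := hconv.norm_image_sub_le_of_norm_hasDerivWithin_le
      (f := f') (f' := f'') (C := M₂)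
      (fun y hy => (hdf' y (ne_of_gt hy.1)).hasDerivWithinAt)
      (fun y hy => by rw [Real.norm_eq_abs]; exact hM₂ y (ne_of_gt hy.1)) hw hu
    rw [Real.norm_eq_abs, Real.norm_eq_abs] at hb
    have h2 : |u - w| ≤ x - μ := by
      rw [abs_le]; constructor <;> nlinarith [hu.1, hu.2, hw.1, hw.2]
    calc |f' u - f' w| ≤ M₂ * |u - w| := hb
      _ ≤ M₂ * (x - μ) := mul_le_mul_of_nonneg_left h2 hM₂0
  have hmvt : ∀ x' ∈ Set.Ioc μ x, ∃ c ∈ Set.Ioo μ x', f' c = (f x' - f μ) / (x' - μ) := by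
    intro x' hx'
    exact exists_hasDerivAt_eq_slope f f' hx'.1 hf.continuousOn
      (fun y hy => hdf y (ne_of_gt hy.1))
  obtain ⟨c, hc, hfc⟩ := hmvt x ⟨hlt, le_refl x⟩
  have hslope : Filter.Tendsto (slope f μ) (nhdsWithin μ (Set.Ioi μ)) (nhds dR) := by
    have h := hasDerivWithinAt_iff_tendsto_slope.mp hdR
    rwa [Set.Ici_sdiff_left] at h
  have hev : ∀ᶠ x' in nhdsWithin μ (Set.Ioi μ), |slope f μ x' - f' c| ≤ M₂ * (x - μ) := by
    filter_upwards [Ioo_mem_nhdsGT_of_mem (Set.mem_Ico.mpr ⟨le_refl μ, hlt⟩)] with x' hx'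
    obtain ⟨c', hc', hfc'⟩ := hmvt x' ⟨hx'.1, le_of_lt hx'.2⟩
    have hs : slope f μ x' = f' c' := by
      rw [slope_def_field, hfc']
    rw [hs]
    exact hlip c' ⟨hc'.1, lt_trans hc'.2 hx'.2⟩ c hc
  have hlim : Filter.Tendsto (fun x' => |slope f μ x' - f' c|) (nhdsWithin μ (Set.Ioi μ))
      (nhds (|dR - f' c|)) := ((hslope.sub tendsto_const_nhds).abs)
  have hcd : |dR - f' c| ≤ M₂ * (x - μ) := le_of_tendsto hlim hev
  have hpos : 0 < x - μ := sub_pos.mpr hlt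
  have h5 : |(f x - f μ)/(x - μ) - dR| ≤ M₂ * (x - μ) := by
    rw [← hfc, abs_sub_comm]; exact hcd
  have key : ((f x - f μ)/(x-μ) - dR) * (x - μ) = f x - f μ - dR*(x-μ) := by
    field_simp
  calc |f x - f μ - dR*(x-μ)| = |((f x - f μ)/(x-μ) - dR) * (x - μ)| := by rw [key]
    _ = |(f x - f μ)/(x-μ) - dR| * |x - μ| := abs_mul _ _
    _ = |(f x - f μ)/(x-μ) - dR| * (x - μ) := by rw [abs_of_pos hpos]
    _ ≤ (M₂*(x-μ))*(x-μ) := mul_le_mul_of_nonneg_right h5 hpos.le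
    _ = M₂*(x-μ)^2 := by ring

lemma lag_bound (m : ℕ) (v : ℕ → ℝ)
    (hv : Set.InjOn v (Finset.range m))
    (q : ℝ[X]) (hq : q.degree < (m : WithBot ℕ))
    (B R P t : ℝ) (hR0 : 0 ≤ R) (hP : 0 < P) (hB0 : 0 ≤ B)
    (hB : ∀ n ∈ Finset.range m, |q.eval (v n)| ≤ B)
    (hRb : ∀ n ∈ Finset.range m, |t - v n| ≤ R)
    (hsep : ∀ n ∈ Finset.range m, P ≤ ∏ k ∈ (Finset.range m).erase n, |v n - v k|) :
    |q.derivative.eval t| ≤ m * (B * (((m-1:ℕ) : ℝ) * R ^ (m - 2) / P)) := by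
  classical
  have hqe : q = Lagrange.interpolate (Finset.range m) v (fun n => q.eval (v n)) :=
    Lagrange.eq_interpolate hv (by simpa using hq)
  have hW0 : 0 ≤ ((m-1:ℕ) : ℝ) * R ^ (m - 2) / P :=
    div_nonneg (mul_nonneg (Nat.cast_nonneg _) (pow_nonneg hR0 _)) hP.le
  -- bound on each basis derivative
  have hbasis : ∀ i ∈ Finset.range m,
      |(Polynomial.derivative (Lagrange.basis (Finset.range m) v i)).eval t|
        ≤ ((m-1:ℕ) : ℝ) * R ^ (m - 2) / P := by
    intro i hi
    set e := (Finset.range m).erase i with he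
    have hb : Lagrange.basis (Finset.range m) v i
        = C (∏ j ∈ e, (v i - v j)⁻¹) * Lagrange.nodal e v := by
      unfold Lagrange.basis Lagrange.basisDivisor
      rw [Lagrange.nodal, ← he, prod_mul_distrib, map_prod]
    rw [hb, derivative_C_mul, Lagrange.derivative_nodal, eval_mul, eval_C, eval_finset_sum,
      abs_mul]
    have hc : |∏ j ∈ e, (v i - v j)⁻¹| ≤ P⁻¹ := by
      rw [abs_prod]
      simp_rw [abs_inv]
      rw [prod_inv_distrib]
      exact inv_anti₀ hP (hsep i hi)
    have hsum : |∑ j ∈ e, (Lagrange.nodal (e.erase j) v).eval t|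
        ≤ ((m-1:ℕ) : ℝ) * R ^ (m - 2) := by
      calc |∑ j ∈ e, (Lagrange.nodal (e.erase j) v).eval t|
          ≤ ∑ j ∈ e, |(Lagrange.nodal (e.erase j) v).eval t| := abs_sum_le_sum_abs _ _
        _ ≤ ∑ _j ∈ e, R ^ (m - 2) := by
            apply sum_le_sum
            intro j hj
            rw [Lagrange.eval_nodal, abs_prod]
            have hcard : (e.erase j).card = m - 2 := by
              rw [card_erase_of_mem hj, he, card_erase_of_mem hi, card_range]
              omega
            calc ∏ k ∈ e.erase j, |t - v k| ≤ ∏ _k ∈ e.erase j, R := by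
                  apply prod_le_prod (fun k _ => abs_nonneg _)
                  intro k hk
                  exact hRb k (mem_of_mem_erase (mem_of_mem_erase hk))
              _ = R ^ (m - 2) := by rw [prod_const, hcard]
        _ = ((m-1:ℕ) : ℝ) * R ^ (m - 2) := by
            rw [sum_const, he, card_erase_of_mem hi, card_range, nsmul_eq_mul]
    calc |∏ j ∈ e, (v i - v j)⁻¹| * |∑ j ∈ e, (Lagrange.nodal (e.erase j) v).eval t|
        ≤ P⁻¹ * (((m-1:ℕ) : ℝ) * R ^ (m - 2)) :=
          mul_le_mul hc hsum (abs_nonneg _) (inv_nonneg.mpr hP.le)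
      _ = ((m-1:ℕ) : ℝ) * R ^ (m - 2) / P := by ring
  conv_lhs => rw [hqe]
  rw [Lagrange.interpolate_apply, derivative_sum, eval_finset_sum]
  calc |∑ i ∈ Finset.range m,
        (Polynomial.derivative (C (q.eval (v i)) * Lagrange.basis (Finset.range m) v i)).eval t|
      ≤ ∑ i ∈ Finset.range m,
        |(Polynomial.derivative (C (q.eval (v i)) * Lagrange.basis (Finset.range m) v i)).eval t| :=
        abs_sum_le_sum_abs _ _
    _ ≤ ∑ _i ∈ Finset.range m, B * (((m-1:ℕ) : ℝ) * R ^ (m - 2) / P) := by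
        apply sum_le_sum
        intro i hi
        rw [derivative_C_mul, eval_mul, eval_C, abs_mul]
        exact mul_le_mul (hB i hi) (hbasis i hi) (abs_nonneg _) hB0
    _ = m * (B * (((m-1:ℕ) : ℝ) * R ^ (m - 2) / P)) := by
        rw [sum_const, card_range, nsmul_eq_mul]
lemma side_est (m : ℕ) (hm : 2 ≤ m) (hmin hmax : ℝ) (hmin0 : 0 < hmin) (hmm : hmin ≤ hmax)
    (σ' : ℝ) (hσ : hmax / hmin ≤ σ') (M₂ : ℝ) (hM₂0 : 0 ≤ M₂)
    (v : ℕ → ℝ)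
    (hsep1 : ∀ n k, n < m → k < m → n ≠ k → hmin ≤ |v n - v k|)
    (q : ℝ[X]) (hq : q.degree < (m : WithBot ℕ)) (t : ℝ)
    (hvals : ∀ n, n < m → |q.eval (v n)| ≤ M₂ * (((m:ℝ)+1) * hmax)^2)
    (hdist : ∀ n, n < m → |t - v n| ≤ ((m:ℝ)+1) * hmax) :
    |q.derivative.eval t| ≤ ((m:ℝ)^2 * ((m:ℝ)+1)^m * σ'^(m-1)) * hmax * M₂ := by
  have hmax0 : 0 < hmax := lt_of_lt_of_le hmin0 hmm
  set R := ((m:ℝ)+1) * hmax with hR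
  have hR0 : 0 ≤ R := by positivity
  set P := hmin ^ (m-1) with hP
  have hP0 : 0 < P := pow_pos hmin0 _
  have hinj : Set.InjOn v (Finset.range m) := by
    intro a ha b hb hab
    by_contra hne
    have h := hsep1 a b (by simpa using ha) (by simpa using hb) hne
    rw [hab, sub_self, abs_zero] at h
    linarith
  have hsep : ∀ n ∈ Finset.range m, P ≤ ∏ k ∈ (Finset.range m).erase n, |v n - v k| := by
    intro n hn
    calc P = ∏ _k ∈ (Finset.range m).erase n, hmin := by
          rw [prod_const, card_erase_of_mem hn, card_range]
      _ ≤ ∏ k ∈ (Finset.range m).erase n, |v n - v k| := by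
          apply prod_le_prod (fun _ _ => hmin0.le)
          intro k hk
          exact hsep1 n k (mem_range.mp hn) (mem_range.mp (mem_of_mem_erase hk))
            (Ne.symm (ne_of_mem_erase hk))
  have main := lag_bound m v hinj q hq (M₂ * R^2) R P t hR0 hP0 (by positivity)
    (fun n hn => hvals n (mem_range.mp hn)) (fun n hn => hdist n (mem_range.mp hn)) hsep
  refine main.trans ?_
  have hRm : R^2 * R^(m-2) = R^m := by rw [← pow_add]; congr 1; omega
  have e1 : (m:ℝ) * ((M₂ * R^2) * (((m-1:ℕ):ℝ) * R^(m-2) / P))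
      = ((m:ℝ) * ((m-1:ℕ):ℝ)) * M₂ * (R^m / P) := by
    rw [← hRm]; field_simp
  rw [e1]
  have e2 : R^m = ((m:ℝ)+1)^m * hmax^m := mul_pow _ _ m
  have e3 : hmax^m / P = hmax * (hmax/hmin)^(m-1) := by
    rw [show hmax^m = hmax^(m-1)*hmax from by rw [← pow_succ]; congr 1; omega, hP, div_pow]
    ring
  have hσ0 : 0 ≤ σ' := le_trans (by positivity) hσ
  have e4 : (hmax/hmin)^(m-1) ≤ σ'^(m-1) := pow_le_pow_left₀ (by positivity) hσ _
  have ecast : ((m-1:ℕ):ℝ) ≤ (m:ℝ) := by exact_mod_cast Nat.sub_le m 1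
  calc ((m:ℝ) * ((m-1:ℕ):ℝ)) * M₂ * (R^m / P)
      = ((m:ℝ) * ((m-1:ℕ):ℝ) * ((m:ℝ)+1)^m) * M₂ * (hmax * (hmax/hmin)^(m-1)) := by
        rw [e2, mul_div_assoc, e3]; ring
    _ ≤ ((m:ℝ) * (m:ℝ) * ((m:ℝ)+1)^m) * M₂ * (hmax * σ'^(m-1)) := by
        apply mul_le_mul
        · apply mul_le_mul_of_nonneg_right _ hM₂0
          apply mul_le_mul_of_nonneg_right _ (by positivity)
          exact mul_le_mul_of_nonneg_left ecast (by positivity)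
        · exact mul_le_mul_of_nonneg_left e4 hmax0.le
        · positivity
        · positivity
    _ = ((m:ℝ)^2 * ((m:ℝ)+1)^m * σ'^(m-1)) * hmax * M₂ := by ring
set_option maxHeartbeats 2000000 in
/-- There is a constant `D > 0`, depending only on `m` and `σ`, such that for grid
points `a = x_{ja} ≤ μ ≤ b = x_{jb}` with `b − a ≤ 2h`, the one-sided interpolating
polynomials `p⁻` (at the `m` nodes ending at `a`) and `p⁺` (at the `m` nodes starting
at `b`) satisfy `|(p⁺)'(t) − (p⁻)'(t)| ≥ |[f']| − 2(D+2) h M₂` on `[a,b]`; consequently,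
if `h < (2/(D+2))·h_c`, then `p⁺ − p⁻` is strictly monotone on `[a,b]` and has at most
one zero there. -/
theorem statement16 (m : ℕ) (hm : 2 ≤ m) (σ : ℝ) :
    ∃ D : ℝ, 0 < D ∧
    ∀ (X : ℤ → ℝ), StrictMono X →
    ∀ hmin hmax : ℝ, 0 < hmin →
      (∀ i : ℤ, hmin ≤ X i - X (i - 1)) →
      (∀ i : ℤ, X i - X (i - 1) ≤ hmax) →
      hmax / hmin ≤ σ →
    ∀ (f f' f'' : ℝ → ℝ) (μ : ℝ),
      Continuous f →
      (∀ x ≠ μ, HasDerivAt f (f' x) x) →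
      (∀ x ≠ μ, HasDerivAt f' (f'' x) x) →
      ContinuousOn f'' {μ}ᶜ →
    ∀ M₂ : ℝ, (∀ x ≠ μ, |f'' x| ≤ M₂) →
    ∀ dL dR : ℝ,
      HasDerivWithinAt f dL (Set.Iic μ) μ →
      HasDerivWithinAt f dR (Set.Ici μ) μ →
      dR - dL ≠ 0 →
    ∀ ja jb : ℤ, X ja ≤ μ → μ ≤ X jb → X jb - X ja ≤ 2 * hmax →
    ∀ pm pp : Polynomial ℝ, pm.degree < m → pp.degree < m →
      (∀ n : ℕ, n < m → pm.eval (X (ja - (n : ℤ))) = f (X (ja - (n : ℤ)))) →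
      (∀ n : ℕ, n < m → pp.eval (X (jb + (n : ℤ))) = f (X (jb + (n : ℤ)))) →
      (∀ t ∈ Set.Icc (X ja) (X jb),
        |dR - dL| - 2 * (D + 2) * hmax * M₂
          ≤ |pp.derivative.eval t - pm.derivative.eval t|) ∧
      (hmax < 2 / (D + 2) * (|dR - dL| / (4 * M₂)) →
        (StrictMonoOn (fun t => pp.eval t - pm.eval t) (Set.Icc (X ja) (X jb)) ∨
          StrictAntiOn (fun t => pp.eval t - pm.eval t) (Set.Icc (X ja) (X jb))) ∧
        ∀ y ∈ Set.Icc (X ja) (X jb), ∀ z ∈ Set.Icc (X ja) (X jb),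
          pp.eval y = pm.eval y → pp.eval z = pm.eval z → y = z) := by
  have hm0 : (0:ℝ) < m := by exact_mod_cast (by omega : 0 < m)
  set D : ℝ := (m:ℝ)^2 * ((m:ℝ)+1)^m * (max σ 1)^(m-1) with hD
  have hmax1 : (1:ℝ) ≤ max σ 1 := le_max_right σ 1
  have hDpos : 0 < D := by
    apply mul_pos (mul_pos (pow_pos hm0 2) (pow_pos (by positivity) m))
    exact pow_pos (lt_of_lt_of_le one_pos hmax1) _
  refine ⟨D, hDpos, ?_⟩
  intro X hX hmin hmax hmin0 hlo hhi hσ f f' f'' μ hf hdf hdf' _hcf'' M₂ hM₂ dL dR hdL hdR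
    _hjump ja jb ha hb hba pm pp hdegm hdegp hIm hIp
  have hmaxmin : hmin ≤ hmax := (hlo 0).trans (hhi 0)
  have hmax0 : 0 < hmax := lt_of_lt_of_le hmin0 hmaxmin
  have hM₂0 : 0 ≤ M₂ := le_trans (abs_nonneg _) (hM₂ (μ+1) (by norm_num))
  have hσ' : hmax / hmin ≤ max σ 1 := le_trans hσ (le_max_left σ 1)
  have tL := taylor_left f f' f'' μ hf hdf hdf' M₂ hM₂0 hM₂ dL hdL
  have tR := taylor_right f f' f'' μ hf hdf hdf' M₂ hM₂0 hM₂ dR hdR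
  have hmuja : μ - X ja ≤ 2 * hmax := by linarith
  have hmujb : X jb - μ ≤ 2 * hmax := by linarith
  have hcastm : ∀ n : ℕ, n < m → (n:ℝ) ≤ (m:ℝ) - 1 := by
    intro n hn
    have : (n:ℝ) + 1 ≤ m := by exact_mod_cast hn
    linarith
  -- ===== left side =====
  have hvL : ∀ n : ℕ, X (ja - (n:ℤ)) ≤ X ja := fun n => hX.monotone (by omega)
  have hdL1 : ∀ n : ℕ, X ja - X (ja - (n:ℤ)) ≤ (n:ℝ) * hmax :=
    fun n => grid_upper X hmax hhi n ja
  have hsepL : ∀ n k, n < m → k < m → n ≠ k → hmin ≤ |X (ja - (n:ℤ)) - X (ja - (k:ℤ))| := by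
    have base : ∀ n k : ℕ, n < k → hmin ≤ X (ja - (n:ℤ)) - X (ja - (k:ℤ)) := by
      intro n k hnk
      have h := grid_lower X hmin hlo (k-n) (ja - (n:ℤ))
      have e : (ja - (n:ℤ)) - ((k-n:ℕ):ℤ) = ja - (k:ℤ) := by omega
      rw [e] at h
      have hk1 : (1:ℝ) ≤ ((k-n:ℕ):ℝ) := by exact_mod_cast (by omega : 1 ≤ k - n)
      nlinarith
    intro n k _ _ hne
    rcases Nat.lt_or_ge n k with h | h
    · exact le_trans (base n k h) (le_abs_self _)
    · rw [abs_sub_comm]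
      exact le_trans (base k n (by omega)) (le_abs_self _)
  set qL := pm - (Polynomial.C dL * Polynomial.X + Polynomial.C (f μ - dL * μ)) with hqLdef
  have hdegqL : qL.degree < (m : WithBot ℕ) := by
    apply lt_of_le_of_lt (Polynomial.degree_sub_le _ _)
    apply max_lt hdegm
    apply lt_of_le_of_lt Polynomial.degree_linear_le
    exact_mod_cast (by omega : 1 < m)
  have hqLeval : ∀ n, n < m →
      qL.eval (X (ja - (n:ℤ))) = f (X (ja - (n:ℤ))) - f μ - dL * (X (ja - (n:ℤ)) - μ) := by
    intro n hn
    rw [hqLdef]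
    rw [Polynomial.eval_sub, Polynomial.eval_add, Polynomial.eval_mul, Polynomial.eval_C,
      Polynomial.eval_X, Polynomial.eval_C, hIm n hn]
    ring
  have hqLder : ∀ t : ℝ, qL.derivative.eval t = pm.derivative.eval t - dL := by
    intro t
    rw [hqLdef]
    simp
  have hvalsL : ∀ n, n < m → |qL.eval (X (ja - (n:ℤ)))| ≤ M₂ * (((m:ℝ)+1) * hmax)^2 := by
    intro n hn
    rw [hqLeval n hn]
    have hle : X (ja - (n:ℤ)) ≤ μ := le_trans (hvL n) ha
    have h1 := tL (X (ja - (n:ℤ))) hle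
    have hd : μ - X (ja - (n:ℤ)) ≤ ((m:ℝ)+1) * hmax := by
      have h2 := hdL1 n
      have h3 := hcastm n hn
      nlinarith
    have hd0 : 0 ≤ μ - X (ja - (n:ℤ)) := by linarith
    refine h1.trans ?_
    apply mul_le_mul_of_nonneg_left _ hM₂0
    exact pow_le_pow_left₀ hd0 hd 2
  have hLest : ∀ t ∈ Set.Icc (X ja) (X jb), |pm.derivative.eval t - dL| ≤ D * hmax * M₂ := by
    intro t ht
    rw [← hqLder t, hD]
    apply side_est m hm hmin hmax hmin0 hmaxmin (max σ 1) hσ' M₂ hM₂0 _ hsepL qL hdegqL t hvalsL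
    intro n hn
    have h2 := hdL1 n
    have h3 := hcastm n hn
    rw [abs_of_nonneg (by linarith [hvL n, ht.1])]
    have := ht.2
    nlinarith
  -- ===== right side =====
  have hvR : ∀ n : ℕ, X jb ≤ X (jb + (n:ℤ)) := fun n => hX.monotone (by omega)
  have hdR1 : ∀ n : ℕ, X (jb + (n:ℤ)) - X jb ≤ (n:ℝ) * hmax := by
    intro n
    have h := grid_upper X hmax hhi n (jb + (n:ℤ))
    have e : (jb + (n:ℤ)) - (n:ℤ) = jb := by omega
    rw [e] at h
    exact h
  have hsepR : ∀ n k, n < m → k < m → n ≠ k → hmin ≤ |X (jb + (n:ℤ)) - X (jb + (k:ℤ))| := by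
    have base : ∀ n k : ℕ, n < k → hmin ≤ X (jb + (k:ℤ)) - X (jb + (n:ℤ)) := by
      intro n k hnk
      have h := grid_lower X hmin hlo (k-n) (jb + (k:ℤ))
      have e : (jb + (k:ℤ)) - ((k-n:ℕ):ℤ) = jb + (n:ℤ) := by omega
      rw [e] at h
      have hk1 : (1:ℝ) ≤ ((k-n:ℕ):ℝ) := by exact_mod_cast (by omega : 1 ≤ k - n)
      nlinarith
    intro n k _ _ hne
    rcases Nat.lt_or_ge n k with h | h
    · rw [abs_sub_comm]
      exact le_trans (base n k h) (le_abs_self _)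
    · exact le_trans (base k n (by omega)) (le_abs_self _)
  set qR := pp - (Polynomial.C dR * Polynomial.X + Polynomial.C (f μ - dR * μ)) with hqRdef
  have hdegqR : qR.degree < (m : WithBot ℕ) := by
    apply lt_of_le_of_lt (Polynomial.degree_sub_le _ _)
    apply max_lt hdegp
    apply lt_of_le_of_lt Polynomial.degree_linear_le
    exact_mod_cast (by omega : 1 < m)
  have hqReval : ∀ n, n < m →
      qR.eval (X (jb + (n:ℤ))) = f (X (jb + (n:ℤ))) - f μ - dR * (X (jb + (n:ℤ)) - μ) := by
    intro n hn
    rw [hqRdef]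
    rw [Polynomial.eval_sub, Polynomial.eval_add, Polynomial.eval_mul, Polynomial.eval_C,
      Polynomial.eval_X, Polynomial.eval_C, hIp n hn]
    ring
  have hqRder : ∀ t : ℝ, qR.derivative.eval t = pp.derivative.eval t - dR := by
    intro t
    rw [hqRdef]
    simp
  have hvalsR : ∀ n, n < m → |qR.eval (X (jb + (n:ℤ)))| ≤ M₂ * (((m:ℝ)+1) * hmax)^2 := by
    intro n hn
    rw [hqReval n hn]
    have hle : μ ≤ X (jb + (n:ℤ)) := le_trans hb (hvR n)
    have h1 := tR (X (jb + (n:ℤ))) hle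
    have hd : X (jb + (n:ℤ)) - μ ≤ ((m:ℝ)+1) * hmax := by
      have h2 := hdR1 n
      have h3 := hcastm n hn
      nlinarith
    have hd0 : 0 ≤ X (jb + (n:ℤ)) - μ := by linarith
    refine h1.trans ?_
    apply mul_le_mul_of_nonneg_left _ hM₂0
    exact pow_le_pow_left₀ hd0 hd 2
  have hRest : ∀ t ∈ Set.Icc (X ja) (X jb), |pp.derivative.eval t - dR| ≤ D * hmax * M₂ := by
    intro t ht
    rw [← hqRder t, hD]
    apply side_est m hm hmin hmax hmin0 hmaxmin (max σ 1) hσ' M₂ hM₂0 _ hsepR qR hdegqR t hvalsR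
    intro n hn
    have h2 := hdR1 n
    have h3 := hcastm n hn
    rw [abs_sub_comm, abs_of_nonneg (by linarith [hvR n, ht.2])]
    have := ht.1
    nlinarith
  -- ===== key estimate =====
  have key : ∀ t ∈ Set.Icc (X ja) (X jb),
      |dR - dL| - 2 * (D + 2) * hmax * M₂
        ≤ |pp.derivative.eval t - pm.derivative.eval t| := by
    intro t ht
    have h1 := hLest t ht
    have h2 := hRest t ht
    have tri : |dR - dL| ≤ |pp.derivative.eval t - dR|
        + |pp.derivative.eval t - pm.derivative.eval t| + |pm.derivative.eval t - dL| := by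
      calc |dR - dL|
          = |-(pp.derivative.eval t - dR) + (pp.derivative.eval t - pm.derivative.eval t)
              + (pm.derivative.eval t - dL)| := by congr 1; ring
        _ ≤ |-(pp.derivative.eval t - dR) + (pp.derivative.eval t - pm.derivative.eval t)|
              + |pm.derivative.eval t - dL| := abs_add_le _ _
        _ ≤ |-(pp.derivative.eval t - dR)| + |pp.derivative.eval t - pm.derivative.eval t|
              + |pm.derivative.eval t - dL| := by
            apply add_le_add (abs_add_le _ _) le_rfl
        _ = _ := by rw [abs_neg]
    have e : 2*(D+2)*hmax*M₂ = 2*(D*hmax*M₂) + 4*(hmax*M₂) := by ring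
    have pos : 0 ≤ hmax * M₂ := by positivity
    linarith
  refine ⟨key, ?_⟩
  -- ===== monotonicity part =====
  intro hsmall
  have hM₂pos : 0 < M₂ := by
    rcases hM₂0.lt_or_eq with h | h
    · exact h
    · exfalso
      rw [← h] at hsmall
      norm_num at hsmall
      linarith
  have heq : 2 / (D+2) * (|dR - dL| / (4*M₂)) = |dR - dL| / (2*(D+2)*M₂) := by
    rw [div_mul_div_comm, div_eq_div_iff (by positivity) (by positivity)]
    ring
  rw [heq] at hsmall
  have hsmall' : hmax * (2*(D+2)*M₂) < |dR - dL| := (lt_div_iff₀ (by positivity)).mp hsmall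
  have hε : 0 < |dR - dL| - 2*(D+2)*hmax*M₂ := by nlinarith
  set s := Set.Icc (X ja) (X jb) with hs
  set φ : ℝ → ℝ := fun t => pp.derivative.eval t - pm.derivative.eval t with hφ
  have hφcont : Continuous φ := (Polynomial.continuous _).sub (Polynomial.continuous _)
  have hne : ∀ t ∈ s, φ t ≠ 0 := by
    intro t ht h0
    have hk := key t ht
    have h0' : pp.derivative.eval t - pm.derivative.eval t = 0 := h0
    rw [h0', abs_zero] at hk
    linarith
  have hdich : (∀ t ∈ s, 0 < φ t) ∨ (∀ t ∈ s, φ t < 0) := by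
    by_contra hcon
    push_neg at hcon
    obtain ⟨⟨t₁, ht₁, ht₁'⟩, t₂, ht₂, ht₂'⟩ := hcon
    have hsub : Set.uIcc t₁ t₂ ⊆ s := (Set.ordConnected_Icc).uIcc_subset ht₁ ht₂
    have h0 : (0:ℝ) ∈ Set.uIcc (φ t₁) (φ t₂) := Set.mem_uIcc.mpr (Or.inl ⟨ht₁', ht₂'⟩)
    obtain ⟨z, hz, hz0⟩ := intermediate_value_uIcc hφcont.continuousOn h0
    exact hne z (hsub hz) hz0
  set g : ℝ → ℝ := fun t => pp.eval t - pm.eval t with hg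
  have hgd : ∀ x : ℝ, HasDerivAt g (φ x) x :=
    fun x => (pp.hasDerivAt x).sub (pm.hasDerivAt x)
  have hgc : ContinuousOn g s := ((Polynomial.continuous _).sub (Polynomial.continuous _)).continuousOn
  have hmono : StrictMonoOn g s ∨ StrictAntiOn g s := by
    rcases hdich with hpos | hneg
    · left
      apply strictMonoOn_of_deriv_pos (convex_Icc _ _) hgc
      intro x hx
      rw [interior_Icc] at hx
      rw [(hgd x).deriv]
      exact hpos x (Set.Ioo_subset_Icc_self hx)
    · right
      apply strictAntiOn_of_deriv_neg (convex_Icc _ _) hgc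
      intro x hx
      rw [interior_Icc] at hx
      rw [(hgd x).deriv]
      exact hneg x (Set.Ioo_subset_Icc_self hx)
  refine ⟨hmono, ?_⟩
  intro y hy z hz hyz hzz
  have hgy : g y = 0 := by rw [hg]; simp [hyz]
  have hgz : g z = 0 := by rw [hg]; simp [hzz]
  rcases hmono with hmono | hanti
  · exact hmono.injOn hy hz (by rw [hgy, hgz])
  · exact hanti.injOn hy hz (by rw [hgy, hgz])
end
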